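/- arXiv:2003.10320 — 3 statements merged into one kernel-verified Lean document; each statement's English description precedes it below -/
import Mathlib

section
/- Let A ⊆ B ⊊ V(G) with A nonempty and let x ∈ A. Set a := min_{y ∈ ∂A} gr_B(x,y), b := max_{y ∈ ∂A} gr_B(x,y), and δ := max{|gr_B(x,u) − gr_B(x,v)| : u, v ∈ B, u adjacent to v} (taken to be 0 if B contains no edge). Then a²/(a + δ) ≤ R(A ↔ V(G)∖B) ≤ b + δ. -/
open Finset

noncomputable section
open scoped Classical

variable {V : Type*}

/-- Transition matrix of the simple random walk on `G`. -/
def walkP [Fintype V] (G : SimpleGraph V) [DecidableRel G.Adj] : Matrix V V ℝ :=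
  Matrix.of fun u v => if G.Adj u v then 1 / (G.degree u : ℝ) else 0

/-- Transition matrix of the walk killed upon exiting `B`. -/
def walkQ [Fintype V] (G : SimpleGraph V) [DecidableRel G.Adj] (B : Set V) :
    Matrix V V ℝ :=
  Matrix.of fun u v => if u ∈ B ∧ v ∈ B then walkP G u v else 0

/-- Green's function of the walk killed upon exiting `B`:
`Gr_B(x,y) = ∑_{n ≥ 0} (Q_B^n)(x,y)`. -/
def GreenFn [Fintype V] [DecidableEq V] (G : SimpleGraph V) [DecidableRel G.Adj]
    (B : Set V) (x y : V) : ℝ :=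
  ∑' n : ℕ, (walkQ G B ^ n) x y

/-- Normalized Green's function `gr_B(x,y) = Gr_B(x,y) / deg(y)`. -/
def grFn [Fintype V] [DecidableEq V] (G : SimpleGraph V) [DecidableRel G.Adj]
    (B : Set V) (x y : V) : ℝ :=
  GreenFn G B x y / (G.degree y : ℝ)

/-- Dirichlet energy of `f : V(G) → ℝ`, a sum over unoriented edges. -/
def dirEnergy [Fintype V] [DecidableEq V] (G : SimpleGraph V) [DecidableRel G.Adj]
    (f : V → ℝ) : ℝ :=
  ∑ e ∈ G.edgeFinset, Sym2.lift ⟨fun u v => (f u - f v) ^ 2, fun u v => by ring⟩ e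

/-- Effective resistance between `W` and `Z`, via Dirichlet's principle. -/
def effRes [Fintype V] [DecidableEq V] (G : SimpleGraph V) [DecidableRel G.Adj]
    (W Z : Set V) : ℝ :=
  (sInf {E : ℝ | ∃ f : V → ℝ, (∀ w ∈ W, f w = 1) ∧ (∀ z ∈ Z, f z = 0) ∧ E = dirEnergy G f})⁻¹

/-!
Write `g = gr_B(x, ·)` and `L` for the graph Laplacian. The Green series satisfies
`Gr_B = 1 + Gr_B Q_B`, which says that `g` vanishes off `B` and `L g = 𝟙_x` on `B`; it converges
because from every vertex the killed walk leaves `B` within `|V|` steps with positive probability.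
So `g` is superharmonic on `B` with unit flux out of every `S ⊆ B` containing `x`. Its truncation
`min g c` (`c ≥ 0`) is still superharmonic, with flux at most `1` out of `B`, so its energy
`∑ min g c · L (min g c)` is at most `c`.

Lower bound: by the minimum principle `g ≥ a` on `A`, so `min g a / a` is admissible, with energy
at most `1 / a`; hence `R ≥ a ≥ a² / (a + δ)`.

Upper bound: `g ≤ b + δ` at both ends of every edge leaving `A`, so `w = min g (b + δ)` still has
unit flux out of `A`. For admissible `f`, clipped to `[0, 1]`, Green's identity and
Cauchy–Schwarz give `1 ≤ ⟨w, f⟩² ≤ E(w) E(f) ≤ (b + δ) E(f)`.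
-/

open Matrix

namespace SimpleGraph

variable [Fintype V] (G : SimpleGraph V) [DecidableRel G.Adj]

theorem sum_neighborFinset_eq_sum_darts {M : Type*} [AddCommMonoid M] (F : V → V → M) :
    ∑ u, ∑ v ∈ G.neighborFinset u, F u v = ∑ d : G.Dart, F d.fst d.snd := by
  rw [Finset.sum_sigma']
  exact Finset.sum_bij' (fun p hp => ⟨(p.1, p.2), by simpa using hp⟩)
    (fun d _ => ⟨d.fst, d.snd⟩) (by simp) (by simp) (by simp) (by simp) (by simp)

theorem sum_neighborFinset_comm {M : Type*} [AddCommMonoid M] (F : V → V → M) :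
    ∑ u, ∑ v ∈ G.neighborFinset u, F u v = ∑ u, ∑ v ∈ G.neighborFinset u, F v u := by
  rw [sum_neighborFinset_eq_sum_darts, sum_neighborFinset_eq_sum_darts G fun u v => F v u]
  exact Fintype.sum_equiv (Dart.symm_involutive.toPerm _) _ _ fun _ => rfl

theorem sum_darts_eq_two_mul_sum_edgeFinset (F : V → V → ℝ) (hF : ∀ u v, F u v = F v u) :
    ∑ d : G.Dart, F d.fst d.snd = 2 * ∑ e ∈ G.edgeFinset, Sym2.lift ⟨F, hF⟩ e := by
  rw [← Finset.sum_fiberwise_of_maps_to (g := Dart.edge) (t := G.edgeFinset) (by simp),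
    Finset.mul_sum]
  refine Finset.sum_congr rfl fun e he => ?_
  induction e with
  | _ u v =>
    have huv : G.Adj u v := by simpa using he
    let d : G.Dart := ⟨(u, v), huv⟩
    rw [show ({d' : G.Dart | d'.edge = s(u, v)} : Finset _) = {d, d.symm} from d.edge_fiber,
      Finset.sum_pair d.symm_ne.symm, Sym2.lift_mk]
    simp only [d, Dart.symm, Prod.swap, hF v u]
    ring

def energyForm (f h : V → ℝ) : ℝ :=
  (∑ u, ∑ v ∈ G.neighborFinset u, (f u - f v) * (h u - h v)) / 2

theorem energyForm_sq_le (f h : V → ℝ) :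
    G.energyForm f h ^ 2 ≤ G.energyForm f f * G.energyForm h h := by
  rw [energyForm, energyForm, energyForm, div_pow, div_mul_div_comm, sq (2 : ℝ)]
  gcongr
  simpa only [Finset.sum_sigma', sq] using Finset.sum_mul_sq_le_sq_mul_sq
    (Finset.univ.sigma fun u => G.neighborFinset u)
    (fun p => f p.1 - f p.2) (fun p => h p.1 - h p.2)

variable [DecidableEq V]

theorem lapMatrix_mulVec_apply_eq_sum (f : V → ℝ) (u : V) :
    (G.lapMatrix ℝ *ᵥ f) u = ∑ v ∈ G.neighborFinset u, (f u - f v) := by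
  rw [lapMatrix_mulVec_apply, Finset.sum_sub_distrib, Finset.sum_const,
    card_neighborFinset_eq_degree, nsmul_eq_mul]

theorem energyForm_eq_dotProduct_lapMatrix_mulVec (f h : V → ℝ) :
    G.energyForm f h = h ⬝ᵥ (G.lapMatrix ℝ *ᵥ f) := by
  have hswap := G.sum_neighborFinset_comm fun u v => h u * (f u - f v)
  have hsplit : ∀ u v, (f u - f v) * (h u - h v) = h u * (f u - f v) + h v * (f v - f u) := by
    intro u v; ring
  simp only [energyForm, hsplit, Finset.sum_add_distrib, ← hswap, dotProduct,
    lapMatrix_mulVec_apply_eq_sum, Finset.mul_sum]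
  ring

end SimpleGraph

open SimpleGraph

section DirichletEnergy

variable [Fintype V] [DecidableEq V] (G : SimpleGraph V) [DecidableRel G.Adj]

theorem dirEnergy_eq_energyForm (f : V → ℝ) : dirEnergy G f = G.energyForm f f := by
  rw [energyForm, sum_neighborFinset_eq_sum_darts,
    sum_darts_eq_two_mul_sum_edgeFinset G (fun u v => (f u - f v) * (f u - f v))
      fun u v => by ring, mul_div_cancel_left₀ _ two_ne_zero, dirEnergy]
  refine Finset.sum_congr rfl fun e _ => ?_
  induction e with
  | _ u v => simp only [Sym2.lift_mk]; ring

theorem dirEnergy_nonneg (f : V → ℝ) : 0 ≤ dirEnergy G f :=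
  Finset.sum_nonneg fun e _ => by induction e with | _ u v => exact sq_nonneg _

theorem dirEnergy_comp_le {φ : ℝ → ℝ} (hφ : LipschitzWith 1 φ) (f : V → ℝ) :
    dirEnergy G (φ ∘ f) ≤ dirEnergy G f := by
  refine Finset.sum_le_sum fun e _ => ?_
  induction e with
  | _ u v =>
    simpa [sq_le_sq, ← Real.dist_eq] using hφ.dist_le_mul (f u) (f v)

theorem dirEnergy_const_mul (r : ℝ) (f : V → ℝ) :
    dirEnergy G (fun y => r * f y) = r ^ 2 * dirEnergy G f := by
  rw [dirEnergy, dirEnergy, Finset.mul_sum]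
  refine Finset.sum_congr rfl fun e _ => ?_
  induction e with
  | _ u v => simp only [Sym2.lift_mk]; ring

end DirichletEnergy

namespace SimpleGraph

variable [Fintype V] [DecidableEq V] {G : SimpleGraph V} [DecidableRel G.Adj]

/-- The edges inside `S` cancel. -/
theorem sum_lapMatrix_mulVec_eq_sum_boundary (S : Finset V) (h : V → ℝ) :
    ∑ y ∈ S, (G.lapMatrix ℝ *ᵥ h) y
      = ∑ y ∈ S, ∑ v ∈ G.neighborFinset y with v ∉ S, (h y - h v) := by
  have hinner : ∑ y ∈ S, ∑ v ∈ G.neighborFinset y with v ∈ S, (h y - h v) = 0 := by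
    have hswap : ∑ y ∈ S, ∑ v ∈ G.neighborFinset y with v ∈ S, (h y - h v)
        = ∑ y ∈ S, ∑ v ∈ G.neighborFinset y with v ∈ S, (h v - h y) :=
      Finset.sum_comm' fun y v => by
        simp only [Finset.mem_filter, mem_neighborFinset, G.adj_comm]
        tauto
    have hneg : ∑ y ∈ S, ∑ v ∈ G.neighborFinset y with v ∈ S, (h y - h v)
        = -∑ y ∈ S, ∑ v ∈ G.neighborFinset y with v ∈ S, (h y - h v) := by
      conv_lhs => rw [hswap]
      simp only [← Finset.sum_neg_distrib, neg_sub]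
    linarith
  calc ∑ y ∈ S, (G.lapMatrix ℝ *ᵥ h) y
      = ∑ y ∈ S, (∑ v ∈ G.neighborFinset y with v ∈ S, (h y - h v)
          + ∑ v ∈ G.neighborFinset y with v ∉ S, (h y - h v)) :=
        Finset.sum_congr rfl fun y _ => by
          rw [lapMatrix_mulVec_apply_eq_sum, Finset.sum_filter_add_sum_filter_not]
    _ = _ := by rw [Finset.sum_add_distrib, hinner, zero_add]

theorem eq_of_lapMatrix_mulVec_nonneg {g : V → ℝ} {z : V} (hz : 0 ≤ (G.lapMatrix ℝ *ᵥ g) z)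
    (hmin : ∀ v, G.Adj z v → g z ≤ g v) {v : V} (hv : G.Adj z v) : g v = g z := by
  rw [lapMatrix_mulVec_apply_eq_sum] at hz
  have hterm : ∀ w ∈ G.neighborFinset z, g z - g w ≤ 0 := fun w hw =>
    sub_nonpos.2 (hmin w ((mem_neighborFinset _ _ _).1 hw))
  have := (Finset.sum_eq_zero_iff_of_nonpos hterm).1 (le_antisymm (Finset.sum_nonpos hterm) hz)
    v ((mem_neighborFinset _ _ _).2 hv)
  linarith

theorem exists_boundary_le_of_lapMatrix_mulVec_nonneg (hG : G.Preconnected) {A : Set V}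
    (hA : A ≠ Set.univ) {g : V → ℝ} (hg : ∀ y ∈ A, 0 ≤ (G.lapMatrix ℝ *ᵥ g) y) {y : V}
    (hy : y ∈ A) : ∃ z ∈ A, (∃ t ∉ A, G.Adj z t) ∧ g z ≤ g y := by
  obtain ⟨y₀, hy₀, hmin⟩ := Set.exists_min_image A g A.toFinite ⟨y, hy⟩
  obtain ⟨t₀, ht₀⟩ := Set.ne_univ_iff_exists_notMem A |>.1 hA
  obtain ⟨⟨⟨z, t⟩, hzt⟩, -, ⟨hzA, hz⟩, ht⟩ := (hG y₀ t₀).some.exists_boundary_dart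
    {z | z ∈ A ∧ g z ≤ g y₀} ⟨hy₀, le_rfl⟩ fun h => ht₀ h.1
  refine ⟨z, hzA, ?_, hz.trans (hmin y hy)⟩
  -- otherwise `z`, a minimiser of `g` on `A`, has all its neighbours in `A`, and then
  -- superharmonicity at `z` forces `g t = g z`
  by_contra! hint
  have hnbr : ∀ v, G.Adj z v → v ∈ A := fun v hv => by_contra fun h => hint v h hv
  have hgt : g t = g z :=
    eq_of_lapMatrix_mulVec_nonneg (hg z hzA) (fun v hv => hz.trans (hmin v (hnbr v hv))) hzt
  exact ht ⟨hnbr t hzt, hgt ▸ hz⟩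

theorem lapMatrix_mulVec_min_const_nonneg {g : V → ℝ} {y : V}
    (hy : 0 ≤ (G.lapMatrix ℝ *ᵥ g) y) (c : ℝ) :
    0 ≤ (G.lapMatrix ℝ *ᵥ fun v => min (g v) c) y := by
  rw [lapMatrix_mulVec_apply_eq_sum] at hy ⊢
  rcases le_or_gt (g y) c with hyc | hyc
  · refine hy.trans (Finset.sum_le_sum fun v _ => ?_)
    rw [min_eq_left hyc]
    linarith [min_le_left (g v) c]
  · exact Finset.sum_nonneg fun v _ => by
      rw [min_eq_right hyc.le]
      linarith [min_le_right (g v) c]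

end SimpleGraph

section Truncation

variable [Fintype V] [DecidableEq V] {G : SimpleGraph V} [DecidableRel G.Adj]

theorem dirEnergy_min_const_le {S : Set V} {g : V → ℝ} (hg0 : ∀ y ∉ S, g y = 0)
    (hg : ∀ y ∈ S, 0 ≤ (G.lapMatrix ℝ *ᵥ g) y) {c : ℝ} (hc : 0 ≤ c) :
    dirEnergy G (fun y => min (g y) c) ≤ c * ∑ y ∈ S.toFinset, (G.lapMatrix ℝ *ᵥ g) y := by
  set w := fun y => min (g y) c
  have hw0 : ∀ y ∉ S, w y = 0 := fun y hy => by simp [w, hg0 y hy, hc]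
  have hwS : ∀ y ∈ S, 0 ≤ (G.lapMatrix ℝ *ᵥ w) y := fun y hy =>
    lapMatrix_mulVec_min_const_nonneg (hg y hy) c
  have hflux : ∑ y ∈ S.toFinset, (G.lapMatrix ℝ *ᵥ w) y
      ≤ ∑ y ∈ S.toFinset, (G.lapMatrix ℝ *ᵥ g) y := by
    simp only [sum_lapMatrix_mulVec_eq_sum_boundary]
    refine Finset.sum_le_sum fun y _ => Finset.sum_le_sum fun v hv => ?_
    have hvS : v ∉ S := by simpa using (Finset.mem_filter.1 hv).2
    rw [hw0 v hvS, hg0 v hvS]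
    linarith [min_le_left (g y) c]
  calc dirEnergy G w = ∑ y, w y * (G.lapMatrix ℝ *ᵥ w) y := by
        rw [dirEnergy_eq_energyForm, energyForm_eq_dotProduct_lapMatrix_mulVec, dotProduct]
    _ = ∑ y ∈ S.toFinset, w y * (G.lapMatrix ℝ *ᵥ w) y :=
        (Finset.sum_subset (Finset.subset_univ _) fun y _ hy => by
          rw [hw0 y (by simpa using hy), zero_mul]).symm
    _ ≤ ∑ y ∈ S.toFinset, c * (G.lapMatrix ℝ *ᵥ w) y := Finset.sum_le_sum fun y hy =>
        mul_le_mul_of_nonneg_right (min_le_right _ _) (hwS y (by simpa using hy))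
    _ ≤ c * ∑ y ∈ S.toFinset, (G.lapMatrix ℝ *ᵥ g) y := by
        rw [← Finset.mul_sum]
        exact mul_le_mul_of_nonneg_left hflux hc

theorem one_le_dirEnergy_mul_dirEnergy {A B : Set V} (hAB : A ⊆ B) {w : V → ℝ}
    (hw : ∀ y ∈ B, 0 ≤ (G.lapMatrix ℝ *ᵥ w) y)
    (hflux : ∑ y ∈ A.toFinset, (G.lapMatrix ℝ *ᵥ w) y = 1) {f : V → ℝ}
    (hf1 : ∀ y ∈ A, f y = 1) (hf0 : ∀ y ∉ B, f y = 0) :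
    1 ≤ dirEnergy G w * dirEnergy G f := by
  -- clipping `f` to `[0, 1]` lowers its energy and makes it nonnegative on `B \ A`
  set f' := fun y => max 0 (min 1 (f y))
  have hf'E : dirEnergy G f' ≤ dirEnergy G f :=
    dirEnergy_comp_le G ((LipschitzWith.id.const_min 1).const_max 0) f
  have hf'0 : ∀ y ∉ B, f' y = 0 := fun y hy => by simp [f', hf0 y hy]
  have hpair : 1 ≤ G.energyForm w f' :=
    calc (1 : ℝ) = ∑ y ∈ A.toFinset, f' y * (G.lapMatrix ℝ *ᵥ w) y := by
          rw [← hflux]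
          exact Finset.sum_congr rfl fun y hy => by simp [f', hf1 y (by simpa using hy)]
      _ ≤ ∑ y ∈ B.toFinset, f' y * (G.lapMatrix ℝ *ᵥ w) y :=
          Finset.sum_le_sum_of_subset_of_nonneg (Set.toFinset_subset_toFinset.2 hAB)
            fun y hy _ => mul_nonneg (le_max_left _ _) (hw y (by simpa using hy))
      _ = ∑ y, f' y * (G.lapMatrix ℝ *ᵥ w) y :=
          Finset.sum_subset (Finset.subset_univ _) fun y _ hy => by
            rw [hf'0 y (by simpa using hy), zero_mul]
      _ = G.energyForm w f' := (energyForm_eq_dotProduct_lapMatrix_mulVec G w f').symm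
  calc (1 : ℝ) ≤ G.energyForm w f' ^ 2 := by nlinarith
    _ ≤ dirEnergy G w * dirEnergy G f' := by
        simpa only [dirEnergy_eq_energyForm] using energyForm_sq_le G w f'
    _ ≤ dirEnergy G w * dirEnergy G f := mul_le_mul_of_nonneg_left hf'E (dirEnergy_nonneg G w)

end Truncation

section Substochastic

variable {ι : Type*} [Fintype ι] [DecidableEq ι] {M : Matrix ι ι ℝ}

theorem Matrix.pow_mulVec_one_nonneg (hM : ∀ i j, 0 ≤ M i j) (n : ℕ) (i : ι) :
    0 ≤ (M ^ n *ᵥ 1) i :=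
  Finset.sum_nonneg fun j _ => by simpa using pow_apply_nonneg hM n i j

theorem Matrix.pow_mulVec_one_le_one (hM : ∀ i j, 0 ≤ M i j) (hrow : ∀ i, ∑ j, M i j ≤ 1)
    (n : ℕ) (i : ι) : (M ^ n *ᵥ 1) i ≤ 1 := by
  induction n generalizing i with
  | zero => simp
  | succ n ih =>
    rw [pow_succ', ← mulVec_mulVec]
    exact (Finset.sum_le_sum fun j _ => mul_le_of_le_one_right (hM i j) (ih j)).trans (hrow i)

/-- Shifting the sum by `N` steps multiplies it by at most `c` and changes it by at most `N`. -/
theorem Matrix.sum_range_pow_mulVec_one_le (hM : ∀ i j, 0 ≤ M i j)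
    (hrow : ∀ i, ∑ j, M i j ≤ 1) {N : ℕ} {c : ℝ} (hc : c < 1) (hN : ∀ i, (M ^ N *ᵥ 1) i ≤ c)
    (m : ℕ) (i : ι) : ∑ n ∈ Finset.range m, (M ^ n *ᵥ 1) i ≤ N / (1 - c) := by
  have hshift : ∀ n, (M ^ (N + n) *ᵥ 1) i ≤ c * (M ^ n *ᵥ 1) i := fun n => by
    rw [add_comm, pow_add, ← mulVec_mulVec, mulVec, dotProduct, mulVec, dotProduct,
      Finset.mul_sum]
    exact Finset.sum_le_sum fun j _ => by
      rw [Pi.one_apply, mul_one, mul_comm c]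
      exact mul_le_mul_of_nonneg_left (hN j) (pow_apply_nonneg hM n i j)
  have hsplit := Finset.sum_range_add (fun n => (M ^ n *ᵥ 1) i) m N
  rw [add_comm m N, Finset.sum_range_add] at hsplit
  have htail : 0 ≤ ∑ k ∈ Finset.range N, (M ^ (m + k) *ᵥ 1) i :=
    Finset.sum_nonneg fun k _ => pow_mulVec_one_nonneg hM (m + k) i
  have hhead : ∑ k ∈ Finset.range N, (M ^ k *ᵥ 1) i ≤ N := by
    simpa using Finset.sum_le_sum fun k (_ : k ∈ Finset.range N) =>
      pow_mulVec_one_le_one hM hrow k i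
  have hrest : ∑ k ∈ Finset.range m, (M ^ (N + k) *ᵥ 1) i
      ≤ c * ∑ k ∈ Finset.range m, (M ^ k *ᵥ 1) i := by
    rw [Finset.mul_sum]
    exact Finset.sum_le_sum fun k _ => hshift k
  rw [le_div_iff₀ (sub_pos.2 hc)]
  linarith

theorem Matrix.summable_pow_apply (hM : ∀ i j, 0 ≤ M i j) (hrow : ∀ i, ∑ j, M i j ≤ 1) {N : ℕ}
    (hN : ∀ i, (M ^ N *ᵥ 1) i < 1) (i j : ι) : Summable fun n => (M ^ n) i j := by
  obtain ⟨i₀, -, hi₀⟩ := Finset.univ.exists_max_image (fun i => (M ^ N *ᵥ 1) i)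
    ⟨i, Finset.mem_univ i⟩
  refine summable_of_sum_range_le (pow_apply_nonneg hM · i j) fun m =>
    (Finset.sum_le_sum fun n _ => ?_).trans
      (sum_range_pow_mulVec_one_le hM hrow (hN i₀) (fun i => hi₀ i (Finset.mem_univ i)) m i)
  simpa [mulVec, dotProduct] using
    Finset.single_le_sum (fun k _ => pow_apply_nonneg hM n i k) (Finset.mem_univ j)

theorem Matrix.tsum_pow_apply_eq (hs : ∀ i j, Summable fun n => (M ^ n) i j) (i j : ι) :
    ∑' n, (M ^ n) i j = (1 : Matrix ι ι ℝ) i j + ∑ k, (∑' n, (M ^ n) i k) * M k j := by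
  rw [(hs i j).tsum_eq_zero_add, pow_zero]
  congr 1
  simp only [pow_succ, mul_apply]
  rw [Summable.tsum_finsetSum fun k _ => (hs i k).mul_right _]
  exact Finset.sum_congr rfl fun k _ => tsum_mul_right

end Substochastic

section GreenFunction

variable [Fintype V] {G : SimpleGraph V} [DecidableRel G.Adj] {B : Set V}

theorem walkP_nonneg (u v : V) : 0 ≤ walkP G u v := by
  rw [walkP, Matrix.of_apply]
  split_ifs <;> positivity

theorem walkQ_nonneg (u v : V) : 0 ≤ walkQ G B u v := by
  rw [walkQ, Matrix.of_apply]
  split_ifs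
  exacts [walkP_nonneg u v, le_rfl]

theorem walkQ_le_walkP (u v : V) : walkQ G B u v ≤ walkP G u v := by
  rw [walkQ, Matrix.of_apply]
  split_ifs
  exacts [le_rfl, walkP_nonneg u v]

theorem walkQ_eq_zero_of_notMem_left {u : V} (hu : u ∉ B) (v : V) : walkQ G B u v = 0 := by
  rw [walkQ, Matrix.of_apply, if_neg fun h => hu h.1]

theorem walkQ_eq_zero_of_notMem_right (u : V) {v : V} (hv : v ∉ B) : walkQ G B u v = 0 := by
  rw [walkQ, Matrix.of_apply, if_neg fun h => hv h.2]

theorem sum_walkP (u : V) : ∑ v, walkP G u v = G.degree u * (1 / G.degree u) := by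
  simp only [walkP, Matrix.of_apply]
  rw [← Finset.sum_filter, ← SimpleGraph.neighborFinset_eq_filter, Finset.sum_const,
    SimpleGraph.card_neighborFinset_eq_degree, nsmul_eq_mul]

theorem sum_walkQ_le_one (u : V) : ∑ v, walkQ G B u v ≤ 1 :=
  (Finset.sum_le_sum fun v _ => walkQ_le_walkP u v).trans <| by
    rw [sum_walkP, mul_one_div]
    exact div_self_le_one _

theorem sum_walkQ_mul_lt_one {k : V → ℝ} (hk0 : ∀ v, 0 ≤ k v) (hk1 : ∀ v, k v ≤ 1) {u u' : V}
    (hu : G.Adj u u') (hku : k u' < 1) : ∑ v, walkQ G B u v * k v < 1 := by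
  have hdeg : (G.degree u : ℝ) ≠ 0 :=
    Nat.cast_ne_zero.2 ((G.degree_pos_iff_exists_adj u).2 ⟨u', hu⟩).ne'
  have hPu : 0 < walkP G u u' := by
    rw [walkP, Matrix.of_apply, if_pos hu]
    positivity
  calc ∑ v, walkQ G B u v * k v ≤ ∑ v, walkP G u v * k v :=
        Finset.sum_le_sum fun v _ => mul_le_mul_of_nonneg_right (walkQ_le_walkP u v) (hk0 v)
    _ < ∑ v, walkP G u v :=
        Finset.sum_lt_sum (fun v _ => mul_le_of_le_one_right (walkP_nonneg u v) (hk1 v))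
          ⟨u', Finset.mem_univ _, mul_lt_of_lt_one_right hPu hku⟩
    _ = 1 := by rw [sum_walkP, mul_one_div_cancel hdeg]

variable [DecidableEq V]

theorem walkQ_pow_mulVec_one_lt_one {u z : V} (p : G.Walk u z) (hz : z ∉ B) {n : ℕ}
    (hn : p.length ≤ n) : (walkQ G B ^ (n + 1) *ᵥ 1) u < 1 := by
  rw [pow_succ', ← Matrix.mulVec_mulVec]
  induction p generalizing n with
  | nil => simp [Matrix.mulVec, dotProduct, walkQ_eq_zero_of_notMem_left hz]
  | cons h p ih =>
    obtain ⟨m, rfl⟩ : ∃ m, n = m + 1 := Nat.exists_eq_succ_of_ne_zero (by rw [Walk.length_cons] at hn; omega)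
    refine sum_walkQ_mul_lt_one (Matrix.pow_mulVec_one_nonneg walkQ_nonneg _)
      (Matrix.pow_mulVec_one_le_one walkQ_nonneg sum_walkQ_le_one _) h ?_
    rw [pow_succ', ← Matrix.mulVec_mulVec]
    exact ih hz (by rw [Walk.length_cons] at hn; omega)

theorem summable_walkQ_pow_apply (hG : G.Preconnected) (hB : B ≠ Set.univ) (x y : V) :
    Summable fun n => (walkQ G B ^ n) x y := by
  obtain ⟨z, hz⟩ := Set.ne_univ_iff_exists_notMem B |>.1 hB
  refine Matrix.summable_pow_apply walkQ_nonneg sum_walkQ_le_one (N := Fintype.card V - 1 + 1)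
    (fun u => walkQ_pow_mulVec_one_lt_one (hG u z).some.toPath.1 hz ?_) x y
  have := (hG u z).some.toPath.2.length_lt
  omega

theorem greenFn_eq_zero_of_notMem {x y : V} (hx : x ∈ B) (hy : y ∉ B) : GreenFn G B x y = 0 := by
  refine (tsum_congr fun n => ?_).trans tsum_zero
  cases n with
  | zero => exact Matrix.one_apply_ne fun h => hy (h ▸ hx)
  | succ n =>
    rw [pow_succ, Matrix.mul_apply]
    exact Finset.sum_eq_zero fun v _ => by rw [walkQ_eq_zero_of_notMem_right v hy, mul_zero]

theorem grFn_nonneg (x y : V) : 0 ≤ grFn G B x y :=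
  div_nonneg (tsum_nonneg fun n => Matrix.pow_apply_nonneg walkQ_nonneg n x y) (Nat.cast_nonneg _)

theorem grFn_eq_zero_of_notMem {x y : V} (hx : x ∈ B) (hy : y ∉ B) : grFn G B x y = 0 := by
  rw [grFn, greenFn_eq_zero_of_notMem hx hy, zero_div]

theorem lapMatrix_mulVec_grFn (hG : G.Preconnected) (hB : B ≠ Set.univ) {x y : V} (hx : x ∈ B)
    (hy : y ∈ B) : (G.lapMatrix ℝ *ᵥ grFn G B x) y = if y = x then 1 else 0 := by
  obtain ⟨z, hz⟩ := Set.ne_univ_iff_exists_notMem B |>.1 hB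
  have : Nontrivial V := ⟨⟨y, z, fun h => hz (h ▸ hy)⟩⟩
  have hdeg : (G.degree y : ℝ) ≠ 0 := Nat.cast_ne_zero.2 (hG.degree_pos_of_nontrivial y).ne'
  have hstep : ∀ v, GreenFn G B x v * walkQ G B v y = if G.Adj y v then grFn G B x v else 0 := by
    intro v
    by_cases hv : v ∈ B
    · simp only [walkQ, walkP, Matrix.of_apply, if_pos (And.intro hv hy), G.adj_comm v y]
      split_ifs <;> simp only [grFn, mul_one_div, mul_zero]
    · rw [walkQ_eq_zero_of_notMem_left hv, mul_zero, grFn_eq_zero_of_notMem hx hv, ite_self]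
  have hGreen : GreenFn G B x y
      = (1 : Matrix V V ℝ) x y + ∑ v, GreenFn G B x v * walkQ G B v y :=
    Matrix.tsum_pow_apply_eq (summable_walkQ_pow_apply hG hB) x y
  simp only [hstep, ← Finset.sum_filter, ← SimpleGraph.neighborFinset_eq_filter,
    Matrix.one_apply] at hGreen
  rw [SimpleGraph.lapMatrix_mulVec_apply, grFn, mul_div_cancel₀ _ hdeg, hGreen, eq_comm]
  simp [eq_comm]

end GreenFunction

section EffectiveResistance

variable [Fintype V] [DecidableEq V] (G : SimpleGraph V) [DecidableRel G.Adj] {W Z : Set V}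

def dirichletEnergies (W Z : Set V) : Set ℝ :=
  {E : ℝ | ∃ f : V → ℝ, (∀ w ∈ W, f w = 1) ∧ (∀ z ∈ Z, f z = 0) ∧ E = dirEnergy G f}

theorem effRes_eq_inv_sInf : effRes G W Z = (sInf (dirichletEnergies G W Z))⁻¹ := rfl

theorem bddBelow_dirichletEnergies : BddBelow (dirichletEnergies G W Z) :=
  ⟨0, fun _ ⟨f, _, _, hE⟩ => hE ▸ dirEnergy_nonneg G f⟩

variable {G}

theorem effRes_pos_and_le (hWZ : Disjoint W Z) {c : ℝ}
    (h : ∀ f : V → ℝ, (∀ w ∈ W, f w = 1) → (∀ z ∈ Z, f z = 0) → 1 ≤ c * dirEnergy G f) :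
    0 < effRes G W Z ∧ effRes G W Z ≤ c := by
  set f₀ : V → ℝ := fun y => if y ∈ W then 1 else 0
  have hf₀1 : ∀ w ∈ W, f₀ w = 1 := fun w hw => if_pos hw
  have hf₀0 : ∀ z ∈ Z, f₀ z = 0 := fun z hz => if_neg (hWZ.notMem_of_mem_right hz)
  have hc : 0 < c := lt_of_not_ge fun hc => by
    nlinarith [h f₀ hf₀1 hf₀0, dirEnergy_nonneg G f₀]
  have hinf : c⁻¹ ≤ sInf (dirichletEnergies G W Z) := by
    refine le_csInf ⟨_, f₀, hf₀1, hf₀0, rfl⟩ ?_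
    rintro _ ⟨f, hf1, hf0, rfl⟩
    rw [inv_le_iff_one_le_mul₀' hc]
    exact h f hf1 hf0
  rw [effRes_eq_inv_sInf]
  exact ⟨inv_pos.2 ((inv_pos.2 hc).trans_le hinf),
    (inv_anti₀ (inv_pos.2 hc) hinf).trans_eq (inv_inv c)⟩

theorem le_effRes (hR : 0 < effRes G W Z) {r : ℝ} {f : V → ℝ}
    (hf1 : ∀ w ∈ W, f w = 1) (hf0 : ∀ z ∈ Z, f z = 0) (hE : dirEnergy G f ≤ r⁻¹) :
    r ≤ effRes G W Z := by
  rw [effRes_eq_inv_sInf] at hR ⊢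
  have hinf : sInf (dirichletEnergies G W Z) ≤ r⁻¹ :=
    (csInf_le (bddBelow_dirichletEnergies G) ⟨f, hf1, hf0, rfl⟩).trans hE
  exact (inv_inv r).symm.trans_le (inv_anti₀ (inv_pos.1 hR) hinf)

end EffectiveResistance

structure IsGreenPotential [Fintype V] [DecidableEq V] (G : SimpleGraph V) [DecidableRel G.Adj]
    (B : Set V) (x : V) (g : V → ℝ) : Prop where
  eq_zero_of_notMem : ∀ y ∉ B, g y = 0
  lapMatrix_mulVec_apply : ∀ y ∈ B, (G.lapMatrix ℝ *ᵥ g) y = if y = x then 1 else 0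

theorem isGreenPotential_grFn [Fintype V] [DecidableEq V] {G : SimpleGraph V}
    [DecidableRel G.Adj] (hG : G.Preconnected) {B : Set V} (hB : B ≠ Set.univ) {x : V}
    (hx : x ∈ B) : IsGreenPotential G B x (grFn G B x) :=
  ⟨fun _ hy => grFn_eq_zero_of_notMem hx hy, fun _ hy => lapMatrix_mulVec_grFn hG hB hx hy⟩

namespace IsGreenPotential

variable [Fintype V] [DecidableEq V] {G : SimpleGraph V} [DecidableRel G.Adj] {A B : Set V}
  {x : V} {g : V → ℝ}

theorem lapMatrix_mulVec_nonneg (hg : IsGreenPotential G B x g) {y : V} (hy : y ∈ B) :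
    0 ≤ (G.lapMatrix ℝ *ᵥ g) y := by
  rw [hg.lapMatrix_mulVec_apply y hy]
  split_ifs <;> norm_num

theorem sum_lapMatrix_mulVec (hg : IsGreenPotential G B x g) (hAB : A ⊆ B) (hx : x ∈ A) :
    ∑ y ∈ A.toFinset, (G.lapMatrix ℝ *ᵥ g) y = 1 := by
  rw [Finset.sum_congr rfl fun y hy => hg.lapMatrix_mulVec_apply y (hAB (by simpa using hy)),
    Finset.sum_ite_eq' _ x, if_pos (by simpa using hx)]

theorem dirEnergy_min_const_le (hg : IsGreenPotential G B x g) (hx : x ∈ B) {c : ℝ}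
    (hc : 0 ≤ c) : dirEnergy G (fun y => min (g y) c) ≤ c :=
  (_root_.dirEnergy_min_const_le hg.eq_zero_of_notMem (fun _ => hg.lapMatrix_mulVec_nonneg)
    hc).trans_eq (by rw [hg.sum_lapMatrix_mulVec subset_rfl hx, mul_one])

theorem effRes_le (hg : IsGreenPotential G B x g) (hAB : A ⊆ B) (hx : x ∈ A) {c : ℝ}
    (hc : 0 ≤ c) (hcut : ∀ y ∈ A, ∀ v ∉ A, G.Adj y v → g y ≤ c ∧ g v ≤ c) :
    0 < effRes G A (Set.univ \ B) ∧ effRes G A (Set.univ \ B) ≤ c := by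
  refine effRes_pos_and_le (Set.disjoint_sdiff_right.mono_left hAB) fun f hf1 hf0 => ?_
  set w := fun y => min (g y) c
  have hw : ∀ y ∈ B, 0 ≤ (G.lapMatrix ℝ *ᵥ w) y := fun _ hy =>
    lapMatrix_mulVec_min_const_nonneg (hg.lapMatrix_mulVec_nonneg hy) c
  have hflux : ∑ y ∈ A.toFinset, (G.lapMatrix ℝ *ᵥ w) y = 1 := by
    rw [← hg.sum_lapMatrix_mulVec hAB hx, sum_lapMatrix_mulVec_eq_sum_boundary,
      sum_lapMatrix_mulVec_eq_sum_boundary]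
    refine Finset.sum_congr rfl fun y hy => Finset.sum_congr rfl fun v hv => ?_
    rw [Finset.mem_filter, mem_neighborFinset, Set.mem_toFinset] at hv
    obtain ⟨hyc, hvc⟩ := hcut y (by simpa using hy) v hv.2 hv.1
    simp only [w, min_eq_left hyc, min_eq_left hvc]
  calc (1 : ℝ) ≤ dirEnergy G w * dirEnergy G f :=
        one_le_dirEnergy_mul_dirEnergy hAB hw hflux hf1 fun y hy => hf0 y ⟨trivial, hy⟩
    _ ≤ c * dirEnergy G f :=
        mul_le_mul_of_nonneg_right (hg.dirEnergy_min_const_le (hAB hx) hc) (dirEnergy_nonneg G f)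

theorem le_effRes (hg : IsGreenPotential G B x g) (hx : x ∈ B)
    (hR : 0 < effRes G A (Set.univ \ B)) {a : ℝ} (ha : 0 < a) (hgA : ∀ y ∈ A, a ≤ g y) :
    a ≤ effRes G A (Set.univ \ B) := by
  refine _root_.le_effRes hR (f := fun y => a⁻¹ * min (g y) a) (fun y hy => ?_)
    (fun y hy => ?_) ?_
  · rw [min_eq_right (hgA y hy), inv_mul_cancel₀ ha.ne']
  · rw [hg.eq_zero_of_notMem y hy.2, min_eq_left ha.le, mul_zero]
  · calc dirEnergy G (fun y => a⁻¹ * min (g y) a)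
        = a⁻¹ ^ 2 * dirEnergy G (fun y => min (g y) a) := dirEnergy_const_mul G _ _
      _ ≤ a⁻¹ ^ 2 * a := by gcongr; exact hg.dirEnergy_min_const_le hx ha.le
      _ = a⁻¹ := by field_simp

theorem effRes_le_add (hg : IsGreenPotential G B x g) (hAB : A ⊆ B) (hx : x ∈ A) {b δ : ℝ}
    (hb0 : 0 ≤ b) (hδ0 : 0 ≤ δ) (hb : ∀ y ∈ A, ∀ t ∉ A, G.Adj y t → g y ≤ b)
    (hδ : ∀ u ∈ B, ∀ v ∈ B, G.Adj u v → |g u - g v| ≤ δ) :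
    0 < effRes G A (Set.univ \ B) ∧ effRes G A (Set.univ \ B) ≤ b + δ := by
  refine hg.effRes_le hAB hx (by positivity) fun y hy v hv hyv => ⟨?_, ?_⟩
  · linarith [hb y hy v hv hyv]
  by_cases hvB : v ∈ B
  · linarith [hb y hy v hv hyv, abs_sub_le_iff.1 (hδ y (hAB hy) v hvB hyv)]
  · rw [hg.eq_zero_of_notMem v hvB]
    positivity

theorem le_effRes_of_le_boundary (hg : IsGreenPotential G B x g) (hG : G.Preconnected)
    (hAB : A ⊆ B) (hB : B ≠ Set.univ) (hx : x ∈ B) (hR : 0 < effRes G A (Set.univ \ B)) {a : ℝ}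
    (ha : 0 < a) (haA : ∀ y ∈ A, ∀ t ∉ A, G.Adj y t → a ≤ g y) :
    a ≤ effRes G A (Set.univ \ B) :=
  hg.le_effRes hx hR ha fun y hy => by
    obtain ⟨z, hzA, ⟨t, ht, hzt⟩, hz⟩ := exists_boundary_le_of_lapMatrix_mulVec_nonneg hG
      (fun h => hB (Set.eq_univ_of_univ_subset (h ▸ hAB)))
      (fun y hy => hg.lapMatrix_mulVec_nonneg (hAB hy)) hy
    exact (haA z hzA t ht hzt).trans hz

end IsGreenPotential

theorem stmt0_general [Fintype V] [DecidableEq V] (G : SimpleGraph V) [DecidableRel G.Adj]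
    (hG : G.Connected)
    (A B : Set V) (hAB : A ⊆ B) (hB : B ≠ Set.univ)
    (x : V) (hx : x ∈ A) :
    let gr : V → ℝ := fun y => grFn G B x y
    let bdry : Set V := {y | y ∈ A ∧ ∃ z, z ∉ A ∧ G.Adj y z}
    let a : ℝ := sInf (gr '' bdry)
    let b : ℝ := sSup (gr '' bdry)
    let δ : ℝ := sSup (insert 0 {d : ℝ | ∃ u v, u ∈ B ∧ v ∈ B ∧ G.Adj u v ∧ d = |gr u - gr v|})
    a ^ 2 / (a + δ) ≤ effRes G A (Set.univ \ B) ∧ effRes G A (Set.univ \ B) ≤ b + δ := by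
  intro gr bdry a b δ
  have hg : IsGreenPotential G B x gr := isGreenPotential_grFn hG.preconnected hB (hAB hx)
  have hgr : ∀ y ∈ gr '' bdry, 0 ≤ y := Set.forall_mem_image.2 fun y _ => grFn_nonneg x y
  have himg : (gr '' bdry).Finite := Set.toFinite _
  have hδfin : (insert 0 {d : ℝ | ∃ u v, u ∈ B ∧ v ∈ B ∧ G.Adj u v ∧ d = |gr u - gr v|}).Finite :=
    ((Set.finite_range fun p : V × V => |gr p.1 - gr p.2|).subset
      (by rintro _ ⟨u, v, -, -, -, rfl⟩; exact ⟨(u, v), rfl⟩)).insert 0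
  have hδ0 : 0 ≤ δ := le_csSup hδfin.bddAbove (Set.mem_insert 0 _)
  have hupper := hg.effRes_le_add hAB hx (Real.sSup_nonneg hgr) hδ0
    (fun y hy t ht hyt => le_csSup himg.bddAbove ⟨y, ⟨hy, t, ht, hyt⟩, rfl⟩)
    (fun u hu v hv huv => le_csSup hδfin.bddAbove (Or.inr ⟨u, v, hu, hv, huv, rfl⟩))
  refine ⟨?_, hupper.2⟩
  have ha0 : 0 ≤ a := Real.sInf_nonneg hgr
  rcases ha0.eq_or_lt with ha | ha
  · rw [← ha]
    simpa using hupper.1.le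
  calc a ^ 2 / (a + δ) ≤ a := by
        rw [div_le_iff₀ (by positivity)]
        nlinarith
    _ ≤ _ := hg.le_effRes_of_le_boundary hG.preconnected hAB hB (hAB hx) hupper.1 ha
        fun y hy t ht hyt => csInf_le himg.bddBelow ⟨y, ⟨hy, t, ht, hyt⟩, rfl⟩

theorem stmt0 [Fintype V] [DecidableEq V] (G : SimpleGraph V) [DecidableRel G.Adj]
    (hG : G.Connected) (hV : 2 ≤ Fintype.card V)
    (A B : Set V) (hAB : A ⊆ B) (hB : B ≠ Set.univ) (hA : A.Nonempty)
    (x : V) (hx : x ∈ A) :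
    let gr : V → ℝ := fun y => grFn G B x y
    let bdry : Set V := {y | y ∈ A ∧ ∃ z, z ∉ A ∧ G.Adj y z}
    let a : ℝ := sInf (gr '' bdry)
    let b : ℝ := sSup (gr '' bdry)
    let δ : ℝ := sSup (insert 0 {d : ℝ | ∃ u v, u ∈ B ∧ v ∈ B ∧ G.Adj u v ∧ d = |gr u - gr v|})
    a ^ 2 / (a + δ) ≤ effRes G A (Set.univ \ B) ∧ effRes G A (Set.univ \ B) ≤ b + δ :=
  stmt0_general G hG A B hAB hB x hx
end
end

section
/- Let A ⊆ V(G) be a set such that the simple random walk started from every vertex of G almost surely hits A in finite time. Then for all x, y ∈ V(G)∖A there exists a coupling of X^x and X^y (a single probability space carrying two processes with the respective laws of X^x and X^y) such that, almost surely, ℙ[X^x_{τ^x} = X^y_{τ^y} | 𝒢] ≥ p, where 𝒢 is the σ-algebra generated by the stopped path (X^y_{n ∧ τ^y})_{n ≥ 0} and p := ℙ[X^x disconnects y from A before time τ^x] is the (deterministic) unconditioned probability of the disconnection event. -/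
open MeasureTheory
open scoped Classical ENNReal

noncomputable section

/-- One-step transition probability of the simple random walk on `G`, valued in `[0,∞]`. -/
def srwP {V : Type*} (G : SimpleGraph V) (u v : V) : ℝ≥0∞ :=
  if G.Adj u v then ((G.neighborSet u).ncard : ℝ≥0∞)⁻¹ else 0

/-- `ν` is the law on path space `ℕ → V` of the simple random walk on `G` started at `z`,
characterized by its cylinder probabilities. -/
def IsSRWLaw {V : Type*} [MeasurableSpace V] (G : SimpleGraph V) (z : V)
    (ν : Measure (ℕ → V)) : Prop :=
  IsProbabilityMeasure ν ∧
    ∀ (n : ℕ) (v : ℕ → V),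
      ν {ω | ∀ i ≤ n, ω i = v i} =
        (if v 0 = z then 1 else 0) * ∏ i ∈ Finset.range n, srwP G (v i) (v (i + 1))

/-- First hitting time of `A` by a path (junk value `0` if `A` is never hit). -/
def hitT {V : Type*} (A : Set V) (ω : ℕ → V) : ℕ := sInf {n | ω n ∈ A}

/-- A path `ω` disconnects `y` from `A` before its hitting time of `A`: every finite path
in `G` from `y` to a vertex of `A` passes through `{ω 0, …, ω (hitT A ω)}`. -/
def Disconnects {V : Type*} (G : SimpleGraph V) (A : Set V) (y : V) (ω : ℕ → V) : Prop :=
  ∀ a ∈ A, ∀ w : G.Walk y a, ∃ v ∈ w.support, ∃ n ≤ hitT A ω, ω n = v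

/-- The property required of the coupling `(Xx, Xy)` on `(Ω, μ)`: the two coordinates have the
laws `νx` and `νy` of the two walks, and almost surely the conditional probability, given the
σ-algebra generated by the stopped path of `Xy`, that the two walks first hit `A` at the same
point is at least the probability that the walk from `x` disconnects `y` from `A`. -/
def GoodCoupling {V : Type*} [MeasurableSpace V] (G : SimpleGraph V) (A : Set V) (y : V)
    (νx νy : Measure (ℕ → V)) {Ω : Type} [MeasurableSpace Ω] (μ : Measure Ω)
    (Xx Xy : ℕ → Ω → V) : Prop :=
  IsProbabilityMeasure μ ∧ (∀ n : ℕ, Measurable (Xx n)) ∧ (∀ n : ℕ, Measurable (Xy n)) ∧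
  μ.map (fun ω n => Xx n ω) = νx ∧ μ.map (fun ω n => Xy n ω) = νy ∧
  (∀ᵐ ω ∂μ,
    (νx {w | Disconnects G A y w}).toReal ≤
      (μ[Set.indicator
            {ω' | Xx (hitT A fun n => Xx n ω') ω' = Xy (hitT A fun n => Xy n ω') ω'}
            (fun _ => (1 : ℝ)) |
          MeasurableSpace.comap
            (fun ω' => fun n => Xy (min n (hitT A fun k => Xy k ω')) ω')
            inferInstance]) ω)

/-!
Write `h_b z` (`harmonicMeasure ν A b z`) for the probability that the walk from `z` first enters
`A` at `b`. It is bounded and harmonic off `A`, so its value along the walk stopped at the first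
entrance to any `B ⊇ A` has constant expectation. If the walk `ω` from `x` disconnects `y` from
`A`, the walk from `y` meets the trace `T` of `ω` no later than `A`, hence `h_b y ≤ max_T h_b`:
the path `ω` visits `{h_b ≥ h_b y}` by its exit time, and stopping the walk from `x` at that set
gives `p * h_b y ≤ h_b x`, where `p` is the disconnection probability.

These inequalities are what is needed to write the law of the walk from `x` as a mixture
`∑_b h_b y • ρ_b` with `ρ_b (exit at b) ≥ p`. Sampling the walk `Y` from `y` and then the walk
from `x` according to `ρ_b`, `b` the exit point of `Y`, gives the coupling: given the stopped path
of `Y`, the probability of a common exit point is `ρ_b (exit at b)`.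
-/

open Set Filter ProbabilityTheory

namespace SRW

section Paths

variable {V : Type*} {A B T : Set V} {ω : ℕ → V} {k n : ℕ}

def hitPoint (A : Set V) (ω : ℕ → V) : V := ω (hitT A ω)

def stoppedPath (A : Set V) (ω : ℕ → V) : ℕ → V := fun n => ω (min n (hitT A ω))

lemma hitT_le_of_mem (h : ω k ∈ A) : hitT A ω ≤ k := Nat.sInf_le h

lemma hitPoint_mem (h : ∃ k, ω k ∈ A) : hitPoint A ω ∈ A := Nat.sInf_mem h

lemma notMem_of_lt_hitT (h : k < hitT A ω) : ω k ∉ A := fun hk =>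
  (hitT_le_of_mem hk).not_gt h

lemma hitT_eq_of_mem (hn : ω n ∈ A) (hlt : ∀ k < n, ω k ∉ A) : hitT A ω = n :=
  (hitT_le_of_mem hn).antisymm <| not_lt.1 fun h => hlt _ h (hitPoint_mem ⟨n, hn⟩)

lemma hitT_eq_zero_of_forall_notMem (h : ∀ k, ω k ∉ A) : hitT A ω = 0 := by
  simp [hitT, h]

lemma hitT_eq_iff :
    hitT A ω = n ↔ (ω n ∈ A ∧ ∀ k < n, ω k ∉ A) ∨ (n = 0 ∧ ∀ k, ω k ∉ A) := by
  refine ⟨fun h => ?_, ?_⟩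
  · by_cases hA : ∃ k, ω k ∈ A
    · exact .inl ⟨h ▸ hitPoint_mem hA, fun k hk => notMem_of_lt_hitT (h ▸ hk)⟩
    · push Not at hA
      exact .inr ⟨h ▸ hitT_eq_zero_of_forall_notMem hA, hA⟩
  · rintro (⟨hn, hlt⟩ | ⟨rfl, hA⟩)
    · exact hitT_eq_of_mem hn hlt
    · exact hitT_eq_zero_of_forall_notMem hA

lemma hitPoint_stoppedPath (A : Set V) (ω : ℕ → V) :
    hitPoint A (stoppedPath A ω) = hitPoint A ω := by
  by_cases hA : ∃ k, ω k ∈ A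
  · have : hitT A (stoppedPath A ω) = hitT A ω :=
      hitT_eq_of_mem (by simpa [stoppedPath, hitPoint] using hitPoint_mem hA) fun k hk => by
        simpa [stoppedPath, hk.le] using notMem_of_lt_hitT hk
    simp [hitPoint, this, stoppedPath]
  · push Not at hA
    simp [hitPoint, stoppedPath, hitT_eq_zero_of_forall_notMem hA]

lemma hitPoint_union_mem (hk : k ≤ hitT A ω) (hT : ω k ∈ T) :
    hitPoint (T ∪ A) ω ∈ T := by
  have hle : hitT (T ∪ A) ω ≤ k := hitT_le_of_mem (.inl hT)
  rcases hitPoint_mem (A := T ∪ A) ⟨k, .inl hT⟩ with h | h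
  · exact h
  · have : hitT (T ∪ A) ω = k := hle.antisymm (hk.trans (hitT_le_of_mem h))
    rwa [hitPoint, this]

def cons (z : V) (ω : ℕ → V) : ℕ → V
  | 0 => z
  | n + 1 => ω n

@[simp] lemma cons_zero (z : V) (ω : ℕ → V) : cons z ω 0 = z := rfl

@[simp] lemma cons_succ (z : V) (ω : ℕ → V) (n : ℕ) : cons z ω (n + 1) = ω n := rfl

lemma hitT_cons {z : V} (hz : z ∉ B) (hω : ∃ n, ω n ∈ B) :
    hitT B (cons z ω) = hitT B ω + 1 :=
  hitT_eq_of_mem (hitPoint_mem hω) fun k hk => by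
    cases k with
    | zero => exact hz
    | succ k => exact notMem_of_lt_hitT (ω := ω) (by omega)

lemma hitPoint_cons {z : V} (hz : z ∉ B) (hω : ∃ n, ω n ∈ B) :
    hitPoint B (cons z ω) = hitPoint B ω := by
  simp [hitPoint, hitT_cons hz hω]

def cylinder (n : ℕ) (v : ℕ → V) : Set (ℕ → V) := {ω | ∀ i ≤ n, ω i = v i}

lemma isPiSystem_cylinders : IsPiSystem {s : Set (ℕ → V) | ∃ n v, cylinder n v = s} := by
  have key : ∀ {n m : ℕ} {v w : ℕ → V}, n ≤ m → (cylinder n v ∩ cylinder m w).Nonempty →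
      cylinder n v ∩ cylinder m w = cylinder m w := by
    rintro n m v w hnm ⟨ω₀, hv, hw⟩
    refine inter_eq_right.2 fun ω hω i hi => ?_
    rw [hω i (hi.trans hnm), ← hw i (hi.trans hnm), hv i hi]
  rintro _ ⟨n, v, rfl⟩ _ ⟨m, w, rfl⟩ hne
  rcases le_total n m with h | h
  · exact ⟨m, w, (key h hne).symm⟩
  · rw [inter_comm] at hne ⊢
    exact ⟨n, v, (key h hne).symm⟩

lemma countable_range_cylinder [Countable V] (n : ℕ) :
    (range (cylinder (V := V) n)).Countable := by
  have : cylinder (V := V) n =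
      (fun w : Fin (n + 1) → V => {ω | ∀ j : Fin (n + 1), ω j = w j}) ∘ fun v j => v j := by
    ext v ω
    simp [cylinder, Fin.forall_iff]
  rw [this]
  exact (countable_range _).mono (range_comp_subset_range _ _)

lemma exists_walk_support_subset {G : SimpleGraph V} (hadj : ∀ n, G.Adj (ω n) (ω (n + 1)))
    (k : ℕ) :
    ∃ w : G.Walk (ω 0) (ω k), ∀ v ∈ w.support, v ∈ ω '' Iic k := by
  induction k with
  | zero => exact ⟨.nil, by simp⟩
  | succ k ih =>
    obtain ⟨w, hw⟩ := ih
    refine ⟨w.concat (hadj k), fun v hv => ?_⟩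
    rcases List.mem_append.1 (w.support_concat _ ▸ hv) with hv | hv
    · exact image_mono (Iic_subset_Iic.2 k.le_succ) (hw v hv)
    · exact ⟨k + 1, mem_Iic.2 le_rfl, (List.mem_singleton.1 hv).symm⟩

end Paths

section PathSpace

variable {V : Type*} [MeasurableSpace V] {G : SimpleGraph V} {ν : V → Measure (ℕ → V)}

lemma measurable_cons (z : V) : Measurable (cons z) :=
  measurable_pi_lambda _ fun n => by
    cases n
    exacts [measurable_const, measurable_pi_apply _]

lemma map_cons_apply (z : V) {s : Set (ℕ → V)} (hs : MeasurableSet s) :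
    (Measure.sum fun u => srwP G z u • ν u).map (cons z) s =
      ∑' u, srwP G z u * ν u (cons z ⁻¹' s) := by
  simp [Measure.map_apply (measurable_cons z) hs,
    Measure.sum_apply _ (measurable_cons z hs)]

variable [MeasurableSingletonClass V]

lemma measurableSet_cylinder (n : ℕ) (v : ℕ → V) : MeasurableSet (cylinder n v) := by
  simp only [cylinder, ofPred_forall]
  exact .iInter fun i => .iInter fun _ => measurable_pi_apply i (.singleton _)

lemma ae_start {z : V} {μ : Measure (ℕ → V)} (hμ : IsSRWLaw G z μ) : ∀ᵐ ω ∂μ, ω 0 = z := by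
  have := hμ.1
  have h : μ (cylinder 0 fun _ => z) = μ univ := by
    rw [measure_univ]
    exact (hμ.2 0 fun _ => z).trans (by simp)
  exact ((ae_iff_measure_eq (measurableSet_cylinder 0 _).nullMeasurableSet).2 h).mono
    fun ω hω => hω 0 le_rfl

variable [Countable V]

lemma generateFrom_cylinders :
    MeasurableSpace.generateFrom {s : Set (ℕ → V) | ∃ n v, cylinder n v = s} =
      MeasurableSpace.pi := by
  refine le_antisymm (MeasurableSpace.generateFrom_le ?_) (iSup_le fun i => ?_)
  · rintro _ ⟨n, v, rfl⟩
    exact measurableSet_cylinder n v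
  rintro _ ⟨s, -, rfl⟩
  have : (fun ω : ℕ → V => ω i) ⁻¹' s = ⋃₀ (cylinder i '' {ω | ω i ∈ s}) := by
    ext ω
    refine ⟨fun h => ⟨_, mem_image_of_mem _ h, fun j _ => rfl⟩, ?_⟩
    rintro ⟨_, ⟨ω', hω', rfl⟩, hω⟩
    rw [mem_preimage, hω i le_rfl]
    exact hω'
  rw [this]
  exact .sUnion ((countable_range_cylinder i).mono (image_subset_range _ _)) fun s hs =>
    MeasurableSpace.measurableSet_generateFrom ⟨i, image_subset_range _ _ hs⟩

lemma measurable_hitT (A : Set V) : Measurable (hitT A) := by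
  refine measurable_to_countable' fun n => ?_
  have : hitT A ⁻¹' {n} = ({ω | ω n ∈ A} ∩ ⋂ k < n, {ω | ω k ∉ A}) ∪
      ({_ω | n = 0} ∩ ⋂ k, {ω | ω k ∉ A}) := by
    ext ω
    simp [hitT_eq_iff]
  have hcoord (k : ℕ) (s : Set V) : MeasurableSet {ω : ℕ → V | ω k ∈ s} :=
    measurable_pi_apply k .of_discrete
  rw [this]
  exact .union (.inter (hcoord n A) (.biInter (to_countable _) fun k _ => hcoord k Aᶜ))
    (.inter (.const _) (.iInter fun k => hcoord k Aᶜ))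

lemma measurable_apply_of_measurable {Ω : Type*} [MeasurableSpace Ω] {X : ℕ → Ω → V}
    (hX : ∀ n, Measurable (X n)) {τ : Ω → ℕ} (hτ : Measurable τ) :
    Measurable fun ω => X (τ ω) ω := by
  refine measurable_to_countable' fun v => ?_
  have : (fun ω => X (τ ω) ω) ⁻¹' {v} = ⋃ n, τ ⁻¹' {n} ∩ X n ⁻¹' {v} := by
    ext ω
    simp [eq_comm]
  rw [this]
  exact .iUnion fun n => (hτ (.singleton n)).inter (hX n (.singleton v))

lemma measurable_hitPoint (A : Set V) : Measurable (hitPoint A) :=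
  measurable_apply_of_measurable measurable_pi_apply (measurable_hitT A)

lemma measurable_stoppedPath_apply (A : Set V) (n : ℕ) :
    Measurable fun ω => stoppedPath A ω n :=
  measurable_apply_of_measurable measurable_pi_apply (measurable_const.min (measurable_hitT A))

lemma measurable_stoppedPath (A : Set V) : Measurable (stoppedPath (V := V) A) :=
  measurable_pi_lambda _ (measurable_stoppedPath_apply A)

end PathSpace

section Markov

variable {V : Type*} [Countable V] [MeasurableSpace V] [MeasurableSingletonClass V]
  {G : SimpleGraph V} {ν : V → Measure (ℕ → V)} {A : Set V}

lemma tsum_srwP_eq_one {z : V} {μ : Measure (ℕ → V)} (hμ : IsSRWLaw G z μ) :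
    ∑' u, srwP G z u = 1 := by
  have hcyl : ∀ n v, μ (cylinder n v) = _ := hμ.2
  have hdisj : Pairwise (Function.onFun Disjoint fun u => cylinder 1 (cons z fun _ => u)) :=
    fun u u' huu' => disjoint_left.2 fun ω (hu : ∀ i ≤ 1, _) (hu' : ∀ i ≤ 1, _) => huu' <| by
      simpa using (hu 1 le_rfl).symm.trans (hu' 1 le_rfl)
  have hunion : ⋃ u, cylinder 1 (cons z fun _ => u) = cylinder 0 fun _ => z := by
    ext ω
    simp only [mem_iUnion, cylinder, mem_ofPred_eq, Nat.le_one_iff_eq_zero_or_eq_one,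
      Nat.le_zero, forall_eq_or_imp, forall_eq, cons_zero]
    exact ⟨fun ⟨_, h, _⟩ => h, fun h => ⟨ω 1, h, rfl⟩⟩
  calc ∑' u, srwP G z u = ∑' u, μ (cylinder 1 (cons z fun _ => u)) := by simp [hcyl]
    _ = 1 := by
      rw [← measure_iUnion hdisj fun _ => measurableSet_cylinder _ _, hunion, hcyl]
      simp

theorem eq_map_cons (hν : ∀ z, IsSRWLaw G z (ν z)) (z : V) :
    ν z = (Measure.sum fun u => srwP G z u • ν u).map (cons z) := by
  have := fun u => (hν u).1
  have hcyl : ∀ u n v, ν u (cylinder n v) = _ := fun u => (hν u).2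
  refine ext_of_generate_finite _ generateFrom_cylinders.symm isPiSystem_cylinders ?_ ?_
  · rintro _ ⟨n, v, rfl⟩
    rw [map_cons_apply z (measurableSet_cylinder n v)]
    by_cases h0 : v 0 = z
    · cases n with
      | zero =>
        have : cons z ⁻¹' cylinder 0 v = univ := by
          ext ω
          simp [cylinder, h0]
        simp [this, hcyl, h0, tsum_srwP_eq_one (hν z)]
      | succ n =>
        have : cons z ⁻¹' cylinder (n + 1) v = cylinder n fun i => v (i + 1) := by
          ext ω
          refine ⟨fun h i hi => h (i + 1) (by omega), fun h i hi => ?_⟩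
          cases i with
          | zero => exact h0.symm
          | succ i => exact h i (by omega)
        rw [this, tsum_eq_single (v 1) fun u hu => by simp [hcyl, Ne.symm hu]]
        simp [hcyl, h0, Finset.prod_range_succ', mul_comm]
    · have : cons z ⁻¹' cylinder n v = ∅ := by
        ext ω
        exact iff_false_intro fun h => h0 (h 0 n.zero_le).symm
      simp [this, hcyl, h0]
  · rw [map_cons_apply z .univ]
    simp [tsum_srwP_eq_one (hν z)]

lemma measure_eq_tsum_cons (hν : ∀ z, IsSRWLaw G z (ν z)) (z : V) {s : Set (ℕ → V)}
    (hs : MeasurableSet s) : ν z s = ∑' u, srwP G z u * ν u (cons z ⁻¹' s) := by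
  rw [eq_map_cons hν z, map_cons_apply z hs]

lemma lintegral_eq_tsum_cons (hν : ∀ z, IsSRWLaw G z (ν z)) (z : V) {f : (ℕ → V) → ℝ≥0∞}
    (hf : Measurable f) : ∫⁻ ω, f ω ∂ν z = ∑' u, srwP G z u * ∫⁻ ω, f (cons z ω) ∂ν u := by
  rw [eq_map_cons hν z, lintegral_map hf (measurable_cons z), lintegral_sum_measure]
  simp

lemma ae_of_forall_adj_ae_cons (hν : ∀ z, IsSRWLaw G z (ν z)) (z : V) {p : (ℕ → V) → Prop}
    (hp : MeasurableSet {ω | p ω}) (h : ∀ u, G.Adj z u → ∀ᵐ ω ∂ν u, p (cons z ω)) :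
    ∀ᵐ ω ∂ν z, p ω := by
  rw [eq_map_cons hν z, ae_map_iff (measurable_cons z).aemeasurable hp, Measure.ae_sum_iff]
  intro u
  by_cases hzu : G.Adj z u
  · exact Measure.ae_smul_measure (h u hzu) _
  · simp [srwP, hzu]

lemma ae_adj (hν : ∀ z, IsSRWLaw G z (ν z)) (z : V) :
    ∀ᵐ ω ∂ν z, ∀ n, G.Adj (ω n) (ω (n + 1)) := by
  have hmeas (n : ℕ) : MeasurableSet {ω : ℕ → V | G.Adj (ω n) (ω (n + 1))} := by
    have hadj : MeasurableSet {p : V × V | G.Adj p.1 p.2} := .of_discrete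
    exact (show Measurable fun ω : ℕ → V => (ω n, ω (n + 1)) by fun_prop) hadj
  refine ae_all_iff.2 fun n => ?_
  induction n generalizing z with
  | zero =>
    refine ae_of_forall_adj_ae_cons hν z (hmeas 0) fun u hzu => ?_
    filter_upwards [ae_start (hν u)] with ω h0
    simpa [h0] using hzu
  | succ n ih => exact ae_of_forall_adj_ae_cons hν z (hmeas (n + 1)) fun u _ => ih u

lemma ae_exists_mem_of_measure_eq_one {μ : Measure (ℕ → V)} [IsProbabilityMeasure μ]
    (h : μ {ω | ∃ n, ω n ∈ A} = 1) : ∀ᵐ ω ∂μ, ∃ n, ω n ∈ A := by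
  refine (ae_iff_measure_eq ?_).2 (by rw [h, measure_univ])
  simp only [ofPred_exists]
  exact (MeasurableSet.iUnion fun n => measurable_pi_apply n .of_discrete).nullMeasurableSet

end Markov

section Harmonic

variable {V : Type*} {G : SimpleGraph V} {A B : Set V} {h : V → ℝ≥0∞}

def IsHarmonicOff (G : SimpleGraph V) (B : Set V) (h : V → ℝ≥0∞) : Prop :=
  ∀ z ∉ B, h z = ∑' u, srwP G z u * h u

lemma IsHarmonicOff.mono (hh : IsHarmonicOff G A h) (hAB : A ⊆ B) : IsHarmonicOff G B h :=
  fun z hz => hh z fun hzA => hz (hAB hzA)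

variable [Countable V] [MeasurableSpace V] [MeasurableSingletonClass V] {ν : V → Measure (ℕ → V)}

lemma IsHarmonicOff.lintegral_stoppedPath (hh : IsHarmonicOff G B h)
    (hν : ∀ z, IsSRWLaw G z (ν z)) (hB : ∀ z, ∀ᵐ ω ∂ν z, ∃ n, ω n ∈ B) (n : ℕ) (z : V) :
    ∫⁻ ω, h (stoppedPath B ω n) ∂ν z = h z := by
  have := fun z => (hν z).1
  induction n generalizing z with
  | zero =>
    have : ∀ᵐ ω ∂ν z, h (stoppedPath B ω 0) = h z :=
      (ae_start (hν z)).mono fun ω h0 => by simp [stoppedPath, h0]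
    simp [lintegral_congr_ae this]
  | succ n ih =>
    by_cases hz : z ∈ B
    · have : ∀ᵐ ω ∂ν z, h (stoppedPath B ω (n + 1)) = h z := (ae_start (hν z)).mono
        fun ω h0 => by simp [stoppedPath, Nat.le_zero.1 (hitT_le_of_mem (h0 ▸ hz)), h0]
      simp [lintegral_congr_ae this]
    · rw [lintegral_eq_tsum_cons hν z (f := fun ω => h (stoppedPath B ω (n + 1)))
        (Measurable.of_discrete.comp (measurable_stoppedPath_apply B _)), hh z hz]
      refine tsum_congr fun u => congrArg _ ?_
      rw [← ih u]
      refine lintegral_congr_ae ((hB u).mono fun ω hω => ?_)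
      simp [stoppedPath, hitT_cons hz hω, Nat.succ_min_succ]

lemma IsHarmonicOff.lintegral_hitPoint (hh : IsHarmonicOff G B h)
    (hν : ∀ z, IsSRWLaw G z (ν z)) (hB : ∀ z, ∀ᵐ ω ∂ν z, ∃ n, ω n ∈ B)
    {C : ℝ≥0∞} (hC : C ≠ ∞) (hhC : ∀ v, h v ≤ C) (z : V) :
    ∫⁻ ω, h (hitPoint B ω) ∂ν z = h z := by
  have := (hν z).1
  have hlim := tendsto_lintegral_of_dominated_convergence
    (F := fun n ω => h (stoppedPath B ω n)) (f := fun ω => h (hitPoint B ω)) (fun _ => C)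
    (fun n => Measurable.of_discrete.comp (measurable_stoppedPath_apply B n))
    (fun n => .of_forall fun ω => hhC _) (by simpa using hC)
    ((hB z).mono fun ω _ => tendsto_atTop_of_eventually_const (i₀ := hitT B ω)
      fun n hn => by simp [stoppedPath, hitPoint, min_eq_right hn])
  simp_rw [hh.lintegral_stoppedPath hν hB] at hlim
  exact tendsto_nhds_unique hlim tendsto_const_nhds

def harmonicMeasure (ν : V → Measure (ℕ → V)) (A : Set V) (b z : V) : ℝ≥0∞ :=
  ν z (hitPoint A ⁻¹' {b})

lemma isHarmonicOff_harmonicMeasure (hν : ∀ z, IsSRWLaw G z (ν z))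
    (hA : ∀ z, ∀ᵐ ω ∂ν z, ∃ n, ω n ∈ A) (b : V) :
    IsHarmonicOff G A (harmonicMeasure ν A b) := by
  intro z hz
  rw [harmonicMeasure, measure_eq_tsum_cons hν z (measurable_hitPoint A (.singleton b))]
  refine tsum_congr fun u => congrArg _ (measure_congr ?_)
  filter_upwards [hA u] with ω hω
  show (hitPoint A (cons z ω) ∈ ({b} : Set V)) = (hitPoint A ω ∈ ({b} : Set V))
  rw [hitPoint_cons hz hω]

lemma lintegral_harmonicMeasure_hitPoint (hν : ∀ z, IsSRWLaw G z (ν z))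
    (hA : ∀ z, ∀ᵐ ω ∂ν z, ∃ n, ω n ∈ A) (hAB : A ⊆ B) (b z : V) :
    ∫⁻ ω, harmonicMeasure ν A b (hitPoint B ω) ∂ν z = harmonicMeasure ν A b z :=
  ((isHarmonicOff_harmonicMeasure hν hA b).mono hAB).lintegral_hitPoint hν
    (fun z => (hA z).mono fun _ ⟨n, hn⟩ => ⟨n, hAB hn⟩) ENNReal.one_ne_top
    (fun v => have := (hν v).1; prob_le_one) z

lemma ae_hitPoint_mem_of_disconnects (hν : ∀ z, IsSRWLaw G z (ν z))
    (hA : ∀ z, ∀ᵐ ω ∂ν z, ∃ n, ω n ∈ A) {y : V} {ω : ℕ → V} (hD : Disconnects G A y ω) :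
    ∀ᵐ ω' ∂ν y, hitPoint (ω '' Iic (hitT A ω) ∪ A) ω' ∈ ω '' Iic (hitT A ω) := by
  filter_upwards [ae_start (hν y), hA y, ae_adj hν y] with ω' h0 hω' hadj
  obtain ⟨w, hw⟩ := exists_walk_support_subset hadj (hitT A ω')
  obtain ⟨v, hv, n, hn, rfl⟩ := hD (ω' (hitT A ω')) (hitPoint_mem hω') (w.copy h0 rfl)
  obtain ⟨m, hm, hmv⟩ := hw _ (by rwa [SimpleGraph.Walk.support_copy] at hv)
  exact hitPoint_union_mem hm (hmv ▸ ⟨n, hn, rfl⟩)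

lemma exists_le_hitT_harmonicMeasure_le (hν : ∀ z, IsSRWLaw G z (ν z))
    (hA : ∀ z, ∀ᵐ ω ∂ν z, ∃ n, ω n ∈ A) (b : V) {y : V} {ω : ℕ → V}
    (hD : Disconnects G A y ω) :
    ∃ k ≤ hitT A ω, harmonicMeasure ν A b y ≤ harmonicMeasure ν A b (ω k) := by
  set h := harmonicMeasure ν A b
  obtain ⟨k, hk, hmax⟩ := (Finset.range (hitT A ω + 1)).exists_max_image (h ∘ ω) ⟨0, by simp⟩
  refine ⟨k, Nat.lt_succ_iff.1 (Finset.mem_range.1 hk), ?_⟩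
  calc h y = ∫⁻ ω', h (hitPoint (ω '' Iic (hitT A ω) ∪ A) ω') ∂ν y :=
        (lintegral_harmonicMeasure_hitPoint hν hA subset_union_right b y).symm
    _ ≤ ∫⁻ _, h (ω k) ∂ν y := lintegral_mono_ae <| by
        filter_upwards [ae_hitPoint_mem_of_disconnects hν hA hD] with ω' ⟨j, hj, hj'⟩
        exact hj' ▸ hmax j (Finset.mem_range.2 (Nat.lt_succ_of_le hj))
    _ = h (ω k) := by simp [(hν y).1]

theorem measure_disconnects_mul_le (hν : ∀ z, IsSRWLaw G z (ν z))
    (hA : ∀ z, ∀ᵐ ω ∂ν z, ∃ n, ω n ∈ A) (x y b : V) :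
    ν x {ω | Disconnects G A y ω} * harmonicMeasure ν A b y ≤ harmonicMeasure ν A b x := by
  set h := harmonicMeasure ν A b
  set B := {v | h y ≤ h v} ∪ A
  calc ν x {ω | Disconnects G A y ω} * h y ≤ ν x {ω | h y ≤ h (hitPoint B ω)} * h y := by
        gcongr with ω
        intro hD
        obtain ⟨k, hk, hyk⟩ := exists_le_hitT_harmonicMeasure_le hν hA b hD
        exact hitPoint_union_mem (T := {v | h y ≤ h v}) hk hyk
    _ ≤ ∫⁻ ω, h (hitPoint B ω) ∂ν x := by
        rw [mul_comm]
        exact mul_meas_ge_le_lintegral₀ (f := fun ω => h (hitPoint B ω))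
          ((Measurable.of_discrete (f := h)).comp (measurable_hitPoint B)).aemeasurable _
    _ = h x := lintegral_harmonicMeasure_hitPoint hν hA subset_union_right b x

end Harmonic

section Mixture

variable {Ω V : Type*} [MeasurableSpace Ω] (ν : Measure Ω) {H : Ω → V} {p : ℝ≥0∞}
  {q : V → ℝ≥0∞}

lemma bind_comap_ofFunOfCountable_apply {Ω' : Type*} [MeasurableSpace Ω'] [Countable V]
    [MeasurableSpace V] [MeasurableSingletonClass V] (hH : Measurable H) (ρ : V → Measure Ω')
    {s : Set Ω'} (hs : MeasurableSet s) :
    ((Kernel.ofFunOfCountable ρ).comap H hH ∘ₘ ν) s = ∑' b, ν (H ⁻¹' {b}) * ρ b s := by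
  rw [Measure.bind_apply hs (Kernel.aemeasurable _)]
  change ∫⁻ ω, ρ (H ω) s ∂ν = _
  rw [← lintegral_map (f := fun b => ρ b s) .of_discrete hH, lintegral_countable']
  simp [Measure.map_apply hH (.singleton _), mul_comm]

def mixtureRest (ν : Measure Ω) (H : Ω → V) (p : ℝ≥0∞) (q : V → ℝ≥0∞) : Measure Ω :=
  Measure.sum fun b => (1 - p * q b / ν (H ⁻¹' {b})) • ν.restrict (H ⁻¹' {b})

lemma mixtureRest_apply {s : Set Ω} (hs : MeasurableSet s) :
    mixtureRest ν H p q s = ∑' b, (1 - p * q b / ν (H ⁻¹' {b})) * ν (s ∩ H ⁻¹' {b}) := by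
  simp [mixtureRest, Measure.sum_apply _ hs, Measure.restrict_apply hs]

variable [Countable V] [MeasurableSpace V] [MeasurableSingletonClass V]

lemma tsum_measure_inter_preimage_singleton (hH : Measurable H) {s : Set Ω}
    (hs : MeasurableSet s) : ∑' b, ν (s ∩ H ⁻¹' {b}) = ν s := by
  have hdisj : Pairwise (Function.onFun Disjoint fun b => s ∩ H ⁻¹' {b}) :=
    fun b b' hbb' => disjoint_left.2 fun ω h h' => hbb' ((h.2 : H ω = b).symm.trans h'.2)
  rw [← measure_iUnion hdisj fun b => hs.inter (hH (.singleton b))]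
  congr 1
  ext ω
  simp

variable [IsProbabilityMeasure ν]

lemma le_one_of_forall_mul_le (hH : Measurable H) (hq : ∑' b, q b = 1)
    (hpq : ∀ b, p * q b ≤ ν (H ⁻¹' {b})) : p ≤ 1 := by
  calc p = ∑' b, p * q b := by rw [ENNReal.tsum_mul_left, hq, mul_one]
    _ ≤ ∑' b, ν (H ⁻¹' {b}) := ENNReal.tsum_le_tsum hpq
    _ = 1 := by simpa using tsum_measure_inter_preimage_singleton ν hH .univ

lemma mixtureRest_univ (hH : Measurable H) (hq : ∑' b, q b = 1)
    (hpq : ∀ b, p * q b ≤ ν (H ⁻¹' {b})) : mixtureRest ν H p q univ = 1 - p := by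
  have hsub (b : V) :
      (1 - p * q b / ν (H ⁻¹' {b})) * ν (H ⁻¹' {b}) = ν (H ⁻¹' {b}) - p * q b := by
    rcases eq_or_ne (ν (H ⁻¹' {b})) 0 with h | h
    · simp [h, le_zero_iff.1 (h ▸ hpq b)]
    · rw [ENNReal.sub_mul fun _ _ => measure_ne_top _ _, one_mul,
        ENNReal.div_mul_cancel h (measure_ne_top _ _)]
  have hsum : ∑' b, (ν (H ⁻¹' {b}) - p * q b) + ∑' b, p * q b = 1 := by
    rw [← ENNReal.tsum_add, tsum_congr fun b => tsub_add_cancel_of_le (hpq b)]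
    simpa using tsum_measure_inter_preimage_singleton ν hH .univ
  rw [ENNReal.tsum_mul_left, hq, mul_one] at hsum
  rw [mixtureRest_apply ν .univ]
  simp only [univ_inter, hsub]
  exact ENNReal.eq_sub_of_add_eq
    (ne_top_of_le_ne_top ENNReal.one_ne_top (le_one_of_forall_mul_le ν hH hq hpq)) hsum

/-- `ρ b` gives mass `p` to the fibre over `b`, distributed like `ν`, and spreads the remaining
mass `1 - p` as `mixtureRest`: what is left of `ν` after each fibre has given away the
`p * q b` that the first terms of the mixture put on it. -/
theorem exists_mixture (hH : Measurable H) (hq : ∑' b, q b = 1)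
    (hpq : ∀ b, p * q b ≤ ν (H ⁻¹' {b})) :
    ∃ ρ : V → Measure Ω, (∀ b, IsProbabilityMeasure (ρ b)) ∧
      (∀ s, MeasurableSet s → ∑' b, q b * ρ b s = ν s) ∧
      ∀ b, q b ≠ 0 → p ≤ ρ b (H ⁻¹' {b}) := by
  by_cases hp : p = 0
  · exact ⟨fun _ => ν, fun _ => inferInstance,
      fun s _ => by rw [ENNReal.tsum_mul_right, hq, one_mul], fun b _ => by simp [hp]⟩
  have hfibre : ∀ b, q b ≠ 0 → ν (H ⁻¹' {b}) ≠ 0 := fun b hb h0 =>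
    mul_ne_zero hp hb (le_zero_iff.1 (h0 ▸ hpq b))
  let ρ : V → Measure Ω := fun b => if q b = 0 then ν else
    (p / ν (H ⁻¹' {b})) • ν.restrict (H ⁻¹' {b}) + mixtureRest ν H p q
  have hρ : ∀ b, q b ≠ 0 → ∀ s, MeasurableSet s →
      ρ b s = p / ν (H ⁻¹' {b}) * ν (s ∩ H ⁻¹' {b}) + mixtureRest ν H p q s :=
    fun b hb s hs => by simp [ρ, hb, Measure.restrict_apply hs]
  refine ⟨ρ, fun b => ?_, fun s hs => ?_, fun b hb => ?_⟩
  · by_cases hb : q b = 0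
    · simp only [ρ, hb, if_true]
      infer_instance
    · refine ⟨?_⟩
      rw [hρ b hb _ .univ, univ_inter, mixtureRest_univ ν hH hq hpq,
        ENNReal.div_mul_cancel (hfibre b hb) (measure_ne_top _ _),
        add_tsub_cancel_of_le (le_one_of_forall_mul_le ν hH hq hpq)]
  · have hterm (b : V) : q b * ρ b s =
        p * q b / ν (H ⁻¹' {b}) * ν (s ∩ H ⁻¹' {b}) + q b * mixtureRest ν H p q s := by
      rcases eq_or_ne (q b) 0 with hb | hb
      · simp [hb]
      · rw [hρ b hb s hs, mul_add]
        congr 1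
        simp only [div_eq_mul_inv]
        ring
    have ht (b : V) : p * q b / ν (H ⁻¹' {b}) ≤ 1 :=
      ENNReal.div_le_of_le_mul (by simpa using hpq b)
    rw [tsum_congr hterm, ENNReal.tsum_add, ENNReal.tsum_mul_right, hq, one_mul,
      mixtureRest_apply ν hs, ← ENNReal.tsum_add,
      ← tsum_measure_inter_preimage_singleton ν hH hs]
    exact tsum_congr fun b => by rw [← add_mul, add_tsub_cancel_of_le (ht b), one_mul]
  · rw [hρ b hb _ (hH (.singleton b)), inter_self,
      ENNReal.div_mul_cancel (hfibre b hb) (measure_ne_top _ _)]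
    exact le_self_add

end Mixture

section CondExp

variable {α β γ : Type*} [MeasurableSpace α] [MeasurableSpace β] [MeasurableSpace γ]

theorem condExp_compProd_comap_fst (ν : Measure α) [IsFiniteMeasure ν] (κ : Kernel α β)
    [IsMarkovKernel κ] {f : α × β → ℝ} (hf : Integrable f (ν ⊗ₘ κ)) {Φ : α → γ}
    (hΦ : Measurable Φ) {g : γ → ℝ} (hg : Measurable g)
    (hfg : ∀ a, ∫ b, f (a, b) ∂κ a = g (Φ a)) :
    (ν ⊗ₘ κ)[f | MeasurableSpace.comap (Φ ∘ Prod.fst) inferInstance] =ᵐ[ν ⊗ₘ κ]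
      fun ω => g (Φ ω.1) := by
  have hm : MeasurableSpace.comap (Φ ∘ Prod.fst) inferInstance ≤
      (inferInstance : MeasurableSpace (α × β)) :=
    (hΦ.comp measurable_fst).comap_le
  have hgi : Integrable (fun a => g (Φ a)) ν :=
    ((Measure.integrable_compProd_iff hf.1).1 hf).2.mono (hg.comp hΦ).aestronglyMeasurable
      (.of_forall fun a => by
        rw [← hfg]
        exact (norm_integral_le_integral_norm _).trans (Real.le_norm_self _))
  have hgi' : Integrable (fun ω => g (Φ ω.1)) (ν ⊗ₘ κ) := by
    have : (ν ⊗ₘ κ).map Prod.fst = ν := Measure.fst_compProd ν κ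
    exact (this ▸ hgi).comp_measurable measurable_fst
  refine (ae_eq_condExp_of_forall_setIntegral_eq hm hf (fun _ _ _ => hgi'.integrableOn) ?_
    (hg.comp (comap_measurable _)).aestronglyMeasurable).symm
  rintro _ ⟨T, hT, rfl⟩ -
  have : Φ ∘ Prod.fst ⁻¹' T = (Φ ⁻¹' T) ×ˢ (univ : Set β) := by
    ext
    simp
  rw [this, Measure.setIntegral_compProd (hΦ hT) .univ hgi'.integrableOn,
    Measure.setIntegral_compProd (hΦ hT) .univ hf.integrableOn]
  simp [hfg]

theorem condExp_map_measurableEquiv {Ω Ω' : Type*} {m : MeasurableSpace Ω} [mΩ : MeasurableSpace Ω]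
    [MeasurableSpace Ω'] (e : Ω ≃ᵐ Ω') (μ : Measure Ω) [IsFiniteMeasure μ] (hm : m ≤ mΩ)
    (f : Ω → ℝ) :
    (μ.map e)[f ∘ e.symm | m.comap e.symm] =ᵐ[μ.map e] μ[f | m] ∘ e.symm := by
  have hint : Integrable (f ∘ e.symm) (μ.map e) ↔ Integrable f μ := by
    simp [integrable_map_equiv, Function.comp_def]
  by_cases hf : Integrable f μ
  swap
  · rw [condExp_of_not_integrable hf, condExp_of_not_integrable (hint.not.2 hf)]
    rfl
  have hm' : m.comap e.symm ≤ ‹_› :=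
    (MeasurableSpace.comap_mono hm).trans e.symm.measurable.comap_le
  have hg : Integrable (μ[f | m] ∘ e.symm) (μ.map e) :=
    (integrable_map_equiv e _).2 (by simpa [Function.comp_def] using integrable_condExp)
  have hgm : StronglyMeasurable[m.comap e.symm] (μ[f | m] ∘ e.symm) :=
    stronglyMeasurable_condExp.comp_measurable (comap_measurable e.symm)
  refine (ae_eq_condExp_of_forall_setIntegral_eq hm' (hint.2 hf) (fun _ _ _ => hg.integrableOn) ?_
    hgm.aestronglyMeasurable).symm
  rintro _ ⟨t, ht, rfl⟩ -
  simp only [setIntegral_map_equiv, ← preimage_comp, MeasurableEquiv.symm_comp_self,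
    preimage_id, Function.comp_apply, MeasurableEquiv.symm_apply_apply]
  exact setIntegral_condExp hm hf ht

end CondExp

lemma exists_measurableEquiv_of_small (α : Type*) [MeasurableSpace α] [Small.{0} α] :
    ∃ (β : Type) (_ : MeasurableSpace β), Nonempty (α ≃ᵐ β) := by
  obtain ⟨β, ⟨e⟩⟩ := Small.equiv_small (α := α)
  let _ : MeasurableSpace β := MeasurableSpace.comap e.symm ‹_›
  refine ⟨β, ‹_›, ⟨⟨e, ?_, comap_measurable _⟩⟩⟩
  rw [measurable_iff_comap_le, MeasurableSpace.comap_comp]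
  simp

lemma ae_measure_preimage_singleton_ne_zero {Ω V : Type*} [MeasurableSpace Ω] [Countable V]
    (μ : Measure Ω) (H : Ω → V) : ∀ᵐ ω ∂μ, μ (H ⁻¹' {H ω}) ≠ 0 := by
  refine measure_mono_null (fun ω (h : ¬_) => mem_iUnion.2 ⟨⟨H ω, not_not.1 h⟩, rfl⟩)
    (measure_iUnion_null fun b : {b // μ (H ⁻¹' {b}) = 0} => b.2)

lemma integral_indicator_eq_measureReal_fibre {Ω V : Type*} [MeasurableSpace Ω]
    [MeasurableSpace V] [MeasurableSingletonClass V] (μ : Measure Ω) {H : Ω → V}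
    (hH : Measurable H) (w : Ω) :
    ∫ ω, {p : Ω × Ω | H p.2 = H p.1}.indicator (fun _ => (1 : ℝ)) (w, ω) ∂μ =
      μ.real (H ⁻¹' {H w}) := by
  have : (fun ω => {p : Ω × Ω | H p.2 = H p.1}.indicator (fun _ => (1 : ℝ)) (w, ω)) =
      (H ⁻¹' {H w}).indicator 1 := by
    ext ω
    simp [indicator_apply]
  rw [this, integral_indicator_one (hH (.singleton _))]

section Coupling

variable {V : Type*} [Countable V] [MeasurableSpace V] [MeasurableSingletonClass V]
  {G : SimpleGraph V} {ν : V → Measure (ℕ → V)} {A : Set V}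

theorem exists_coupling (hν : ∀ z, IsSRWLaw G z (ν z)) (hA : ∀ z, ∀ᵐ ω ∂ν z, ∃ n, ω n ∈ A)
    (x y : V) :
    ∃ μ : Measure ((ℕ → V) × (ℕ → V)), IsProbabilityMeasure μ ∧
      μ.map Prod.snd = ν x ∧ μ.map Prod.fst = ν y ∧
      ∀ᵐ ω ∂μ, (ν x {w | Disconnects G A y w}).toReal ≤
        (μ[{ω | hitPoint A ω.2 = hitPoint A ω.1}.indicator fun _ => (1 : ℝ) |
          MeasurableSpace.comap (stoppedPath A ∘ Prod.fst) inferInstance]) ω := by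
  have := fun z => (hν z).1
  have hH := measurable_hitPoint (V := V) A
  obtain ⟨ρ, hρ, hmix, hρp⟩ := exists_mixture (ν x) hH
    (q := fun b => harmonicMeasure ν A b y)
    (by simpa [harmonicMeasure] using tsum_measure_inter_preimage_singleton (ν y) hH .univ)
    (measure_disconnects_mul_le hν hA x y)
  let κ := (Kernel.ofFunOfCountable ρ).comap (hitPoint A) hH
  have : IsMarkovKernel κ := ⟨fun _ => hρ _⟩
  have hfst : (ν y ⊗ₘ κ).map Prod.fst = ν y := Measure.fst_compProd _ _
  have hE : MeasurableSet {ω : (ℕ → V) × (ℕ → V) | hitPoint A ω.2 = hitPoint A ω.1} :=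
    measurableSet_eq_fun (hH.comp measurable_snd) (hH.comp measurable_fst)
  refine ⟨ν y ⊗ₘ κ, inferInstance, ?_, hfst, ?_⟩
  · ext s hs
    rw [← Measure.snd, Measure.snd_compProd, bind_comap_ofFunOfCountable_apply _ hH ρ hs,
      ← hmix s hs]
    rfl
  · have hce := condExp_compProd_comap_fst (ν y) κ ((integrable_const (1 : ℝ)).indicator hE)
      (measurable_stoppedPath A)
      (g := fun w => (ρ (hitPoint A w) (hitPoint A ⁻¹' {hitPoint A w})).toReal)
      ((Measurable.of_discrete (f := fun b => (ρ b (hitPoint A ⁻¹' {b})).toReal)).comp hH)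
      fun w => by
        rw [integral_indicator_eq_measureReal_fibre _ hH, hitPoint_stoppedPath]
        rfl
    filter_upwards [hce, ae_of_ae_map measurable_fst.aemeasurable
      (by rw [hfst]; exact ae_measure_preimage_singleton_ne_zero (ν y) (hitPoint A))]
      with ω h1 h2
    rw [h1, hitPoint_stoppedPath]
    exact ENNReal.toReal_mono (measure_ne_top _ _) (hρp _ h2)

end Coupling

end SRW

theorem stmt6_general {V : Type*} [Countable V] [MeasurableSpace V] [MeasurableSingletonClass V]
    (G : SimpleGraph V)
    (ν : V → Measure (ℕ → V)) (hν : ∀ z : V, IsSRWLaw G z (ν z))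
    (A : Set V) (hhit : ∀ z : V, (ν z) {ω | ∃ n : ℕ, ω n ∈ A} = 1)
    (x y : V) :
    ∃ (Ω : Type) (mΩ : MeasurableSpace Ω) (μ : @Measure Ω mΩ) (Xx Xy : ℕ → Ω → V),
      @GoodCoupling V _ G A y (ν x) (ν y) Ω mΩ μ Xx Xy := by
  have hA : ∀ z, ∀ᵐ ω ∂ν z, ∃ n, ω n ∈ A := fun z =>
    have := (hν z).1
    SRW.ae_exists_mem_of_measure_eq_one (hhit z)
  obtain ⟨μ, hμ, hμx, hμy, hcond⟩ := SRW.exists_coupling hν hA x y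
  obtain ⟨Ω, mΩ, ⟨e⟩⟩ := SRW.exists_measurableEquiv_of_small ((ℕ → V) × (ℕ → V))
  refine ⟨Ω, mΩ, μ.map e, fun n ω => (e.symm ω).2 n, fun n ω => (e.symm ω).1 n,
    Measure.isProbabilityMeasure_map e.measurable.aemeasurable, fun n => by fun_prop,
    fun n => by fun_prop, ?_, ?_, ?_⟩
  · rw [Measure.map_map (by fun_prop) e.measurable]
    simpa [Function.comp_def] using hμx
  · rw [Measure.map_map (by fun_prop) e.measurable]
    simpa [Function.comp_def] using hμy
  · have hm : MeasurableSpace.comap (SRW.stoppedPath A ∘ Prod.fst) inferInstance ≤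
        (inferInstance : MeasurableSpace ((ℕ → V) × (ℕ → V))) :=
      ((SRW.measurable_stoppedPath A).comp measurable_fst).comap_le
    filter_upwards [SRW.condExp_map_measurableEquiv e μ hm
      ({ω | SRW.hitPoint A ω.2 = SRW.hitPoint A ω.1}.indicator fun _ => (1 : ℝ)),
      ((e.measurable.measurePreserving μ).symm e).quasiMeasurePreserving.ae hcond]
      with ω h1 h2
    rw [MeasurableSpace.comap_comp] at h1
    exact h2.trans_eq h1.symm

theorem stmt6 {V : Type*} [Countable V] [MeasurableSpace V] [MeasurableSingletonClass V]
    (G : SimpleGraph V) (hG : G.Connected) (hlf : ∀ v : V, (G.neighborSet v).Finite)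
    (ν : V → Measure (ℕ → V)) (hν : ∀ z : V, IsSRWLaw G z (ν z))
    (A : Set V) (hhit : ∀ z : V, (ν z) {ω | ∃ n : ℕ, ω n ∈ A} = 1)
    (x y : V) (hx : x ∉ A) (hy : y ∉ A) :
    ∃ (Ω : Type) (mΩ : MeasurableSpace Ω) (μ : @Measure Ω mΩ) (Xx Xy : ℕ → Ω → V),
      @GoodCoupling V _ G A y (ν x) (ν y) Ω mΩ μ Xx Xy :=
  stmt6_general G ν hν A hhit x y
end
end

section
/- Let (X_n, Y_n) be random variables in Ω_X × Ω_Y converging in law to (X, Y). Suppose {P_y : y ∈ Ω_Y} is a family of Borel probability measures on Ω_X such that for every bounded continuous f : Ω_X → ℝ the map y ↦ ∫ f dP_y is Borel measurable, and such that for every bounded continuous f : Ω_X → ℝ the pair (E[f(X_n) | Y_n], Y_n) converges in law to (∫ f dP_Y, Y) in ℝ × Ω_Y. Then P_Y is a regular conditional distribution of X given Y: for every bounded continuous f : Ω_X → ℝ, almost surely E[f(X) | σ(Y)] = ∫_{Ω_X} f dP_Y. -/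
open MeasureTheory Filter Topology
open scoped NNReal

/-!
Fix a bounded continuous `φ` on `Ω_Y`. Since `E[f(Xₙ) | Yₙ]` is bounded by `‖f‖`, the law
convergence of `(E[f(Xₙ) | Yₙ], Yₙ)` may be tested against `(r, y) ↦ clamp(r) φ(y)`, so
`E[f(Xₙ) φ(Yₙ)] = E[E[f(Xₙ) | Yₙ] φ(Yₙ)]` tends to `E[(∫ f dP_Y) φ(Y)]`; the law convergence
of `(Xₙ, Yₙ)` says the same sequence tends to `E[f(X) φ(Y)]`. Approximating indicators of
closed sets by such `φ`, a Dynkin argument turns `E[f(X) φ(Y)] = E[(∫ f dP_Y) φ(Y)]` into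
equality of the integrals over every set `{Y ∈ s}`, which characterises `E[f(X) | σ(Y)]`.
-/

lemma integral_condExp_mul_eq {Ω : Type*} {m m₀ : MeasurableSpace Ω} {μ : Measure[m₀] Ω}
    (hm : m ≤ m₀) [SigmaFinite (μ.trim hm)] {f g : Ω → ℝ} (hg : AEStronglyMeasurable[m] g μ)
    (hfg : Integrable (f * g) μ) (hf : Integrable f μ) :
    ∫ x, μ[f | m] x * g x ∂μ = ∫ x, f x * g x ∂μ :=
  calc ∫ x, μ[f | m] x * g x ∂μ = ∫ x, μ[f * g | m] x ∂μ :=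
        integral_congr_ae (condExp_mul_of_aestronglyMeasurable_right hg hfg hf).symm
    _ = ∫ x, f x * g x ∂μ := integral_condExp hm

section

variable {Ω β : Type*} [MeasurableSpace Ω] {μ : Measure Ω} [TopologicalSpace β]

lemma tendsto_integral_mul_of_forall_tendsto_integral {ι : Type*}
    {l : Filter ι} {Zn : ι → Ω → ℝ} {Yn : ι → Ω → β} {Z : Ω → ℝ} {Y : Ω → β} {C : ℝ≥0}
    (hZn : ∀ i, ∀ᵐ ω ∂μ, |Zn i ω| ≤ C) (hZ : ∀ᵐ ω ∂μ, |Z ω| ≤ C)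
    (hconv : ∀ g : BoundedContinuousFunction (ℝ × β) ℝ,
      Tendsto (fun i => ∫ ω, g (Zn i ω, Yn i ω) ∂μ) l (𝓝 (∫ ω, g (Z ω, Y ω) ∂μ)))
    (φ : BoundedContinuousFunction β ℝ) :
    Tendsto (fun i => ∫ ω, Zn i ω * φ (Yn i ω) ∂μ) l (𝓝 (∫ ω, Z ω * φ (Y ω) ∂μ)) := by
  have hclamp_le : ∀ r : ℝ, |max (-(C : ℝ)) (min (C : ℝ) r)| ≤ C := fun r =>
    abs_le.2 ⟨le_max_left _ _, max_le (by simp) (min_le_left _ _)⟩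
  let g : BoundedContinuousFunction (ℝ × β) ℝ :=
    .ofNormedAddCommGroup (fun p => max (-(C : ℝ)) (min (C : ℝ) p.1) * φ p.2) (by fun_prop)
      (C * ‖φ‖) fun p => by
        rw [norm_mul, Real.norm_eq_abs]
        exact mul_le_mul (hclamp_le p.1) (φ.norm_coe_le_norm p.2) (norm_nonneg _) C.2
  have hg : ∀ {Z' : Ω → ℝ} {Y' : Ω → β}, (∀ᵐ ω ∂μ, |Z' ω| ≤ C) →
      ∫ ω, g (Z' ω, Y' ω) ∂μ = ∫ ω, Z' ω * φ (Y' ω) ∂μ := fun hZ' =>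
    integral_congr_ae <| hZ'.mono fun ω hω => by
      rw [abs_le] at hω
      simp [g, min_eq_right hω.2, max_eq_right hω.1]
  rw [← hg hZ]
  exact (hconv g).congr fun i => hg (hZn i)

variable [HasOuterApproxClosed β] [MeasurableSpace β] [BorelSpace β]

lemma tendsto_integral_mul_apprSeq {F : Set β} (hF : IsClosed F) {Y : Ω → β} (hY : Measurable Y)
    {u : Ω → ℝ} (hu : Integrable u μ) :
    Tendsto (fun n => ∫ x, u x * hF.apprSeq n (Y x) ∂μ) atTop (𝓝 (∫ x in Y ⁻¹' F, u x ∂μ)) := by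
  rw [← integral_indicator (hY hF.measurableSet)]
  refine tendsto_integral_of_dominated_convergence (fun x => ‖u x‖)
    (fun n => hu.aestronglyMeasurable.mul
      (NNReal.continuous_coe.measurable.comp
        ((hF.apprSeq n).continuous.measurable.comp hY)).aestronglyMeasurable)
    hu.norm (fun n => ae_of_all _ fun x => ?_) (ae_of_all _ fun x => ?_)
  · rw [norm_mul, NNReal.norm_eq]
    exact mul_le_of_le_one_right (norm_nonneg _)
      (by exact_mod_cast HasOuterApproxClosed.apprSeq_apply_le_one hF n (Y x))
  · have hlim := NNReal.tendsto_coe.2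
      (tendsto_pi_nhds.1 (HasOuterApproxClosed.tendsto_apprSeq hF) (Y x))
    convert hlim.const_mul (u x) using 2
    by_cases hx : Y x ∈ F <;> simp [Set.indicator, hx]

lemma setIntegral_preimage_eq_of_forall_integral_mul_eq {Y : Ω → β} (hY : Measurable Y)
    {u v : Ω → ℝ} (hu : Integrable u μ) (hv : Integrable v μ)
    (huv : ∀ φ : BoundedContinuousFunction β ℝ,
      ∫ x, u x * φ (Y x) ∂μ = ∫ x, v x * φ (Y x) ∂μ)
    {s : Set β} (hs : MeasurableSet s) :
    ∫ x in Y ⁻¹' s, u x ∂μ = ∫ x in Y ⁻¹' s, v x ∂μ := by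
  have htotal : ∫ x, u x ∂μ = ∫ x, v x ∂μ := by simpa using huv 1
  induction s, hs using MeasurableSpace.induction_on_inter
    ((BorelSpace.measurable_eq (α := β)).trans borel_eq_generateFrom_isClosed)
    isPiSystem_isClosed with
  | empty => simp
  | basic F hF =>
    refine tendsto_nhds_unique (tendsto_integral_mul_apprSeq hF hY hu) ?_
    refine (tendsto_integral_mul_apprSeq hF hY hv).congr fun n => ?_
    exact (huv ⟨⟨fun y => hF.apprSeq n y, NNReal.continuous_coe.comp (hF.apprSeq n).continuous⟩,
      (hF.apprSeq n).map_bounded'⟩).symm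
  | compl t ht ih =>
    rw [Set.preimage_compl, setIntegral_compl (hY ht) hu, setIntegral_compl (hY ht) hv,
      htotal, ih]
  | iUnion t htd ht ih =>
    have hdisj : Pairwise (Function.onFun Disjoint fun i => Y ⁻¹' t i) :=
      htd.mono fun _ _ h => h.preimage Y
    rw [Set.preimage_iUnion, integral_iUnion (fun i => hY (ht i)) hdisj hu.integrableOn,
      integral_iUnion (fun i => hY (ht i)) hdisj hv.integrableOn]
    exact tsum_congr ih

end

theorem stmt8_general {ΩX ΩY : Type*}
    [MetricSpace ΩX]
    [MeasurableSpace ΩX] [BorelSpace ΩX]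
    [MetricSpace ΩY]
    [MeasurableSpace ΩY] [BorelSpace ΩY]
    {Ω : Type*} [MeasurableSpace Ω] (μ : Measure Ω) [IsProbabilityMeasure μ]
    (Xn : ℕ → Ω → ΩX) (Yn : ℕ → Ω → ΩY) (X : Ω → ΩX) (Y : Ω → ΩY)
    (hXn : ∀ n, Measurable (Xn n)) (hYn : ∀ n, Measurable (Yn n))
    (hX : Measurable X) (hY : Measurable Y)
    -- `(Xₙ, Yₙ) → (X, Y)` in law
    (hconv : ∀ g : BoundedContinuousFunction (ΩX × ΩY) ℝ,
      Tendsto (fun n => ∫ ω, g (Xn n ω, Yn n ω) ∂μ) atTop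
        (𝓝 (∫ ω, g (X ω, Y ω) ∂μ)))
    (P : ΩY → Measure ΩX) (hP : ∀ y, IsProbabilityMeasure (P y))
    -- for every bounded continuous `f`, `y ↦ ∫ f dP_y` is measurable
    (hPmeas : ∀ f : BoundedContinuousFunction ΩX ℝ,
      Measurable fun y : ΩY => ∫ a, f a ∂(P y))
    -- `(E[f(Xₙ)|Yₙ], Yₙ) → (∫ f dP_Y, Y)` in law in `ℝ × Ω_Y`
    (hcond : ∀ f : BoundedContinuousFunction ΩX ℝ,
      ∀ g : BoundedContinuousFunction (ℝ × ΩY) ℝ,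
        Tendsto
          (fun n => ∫ ω,
            g ((μ[(fun ω' => f (Xn n ω')) |
                  MeasurableSpace.comap (Yn n) inferInstance]) ω, Yn n ω) ∂μ)
          atTop
          (𝓝 (∫ ω, g (∫ a, f a ∂(P (Y ω)), Y ω) ∂μ))) :
    ∀ f : BoundedContinuousFunction ΩX ℝ,
      (μ[(fun ω => f (X ω)) | MeasurableSpace.comap Y inferInstance])
        =ᵐ[μ] fun ω => ∫ a, f a ∂(P (Y ω)) := by
  intro f
  have hf_le : ∀ x, |f x| ≤ ‖f‖₊ := fun x => by simpa using f.norm_coe_le_norm x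
  have hPf_le : ∀ y, |∫ a, f a ∂(P y)| ≤ ‖f‖₊ := fun y => by
    simpa using f.norm_integral_le_norm (μ := P y)
  have hfX : Integrable (fun ω => f (X ω)) μ := (f.integrable _).comp_measurable hX
  have hPfY : Integrable (fun ω => ∫ a, f a ∂(P (Y ω))) μ :=
    .of_bound ((hPmeas f).comp hY).aestronglyMeasurable ‖f‖ (ae_of_all _ fun ω => by
      simpa using hPf_le (Y ω))
  have htest : ∀ φ : BoundedContinuousFunction ΩY ℝ,
      ∫ ω, f (X ω) * φ (Y ω) ∂μ = ∫ ω, (∫ a, f a ∂(P (Y ω))) * φ (Y ω) ∂μ := by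
    intro φ
    refine tendsto_nhds_unique (hconv (f.compContinuous ⟨Prod.fst, continuous_fst⟩ *
      φ.compContinuous ⟨Prod.snd, continuous_snd⟩)) ?_
    refine (tendsto_integral_mul_of_forall_tendsto_integral
      (fun n => ae_bdd_abs_condExp_of_ae_bdd_abs (ae_of_all _ fun ω => hf_le _))
      (ae_of_all _ fun ω => hPf_le _) (hcond f) φ).congr fun n => ?_
    have hfXn : Integrable (fun ω => f (Xn n ω)) μ := (f.integrable _).comp_measurable (hXn n)
    exact integral_condExp_mul_eq (hYn n).comap_le
      (φ.continuous.measurable.comp (comap_measurable _)).aestronglyMeasurable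
      (hfXn.mul_bdd (φ.continuous.measurable.comp (hYn n)).aestronglyMeasurable
        (ae_of_all _ fun ω => φ.norm_coe_le_norm _)) hfXn
  refine (ae_eq_condExp_of_forall_setIntegral_eq hY.comap_le hfX
    (fun _ _ _ => hPfY.integrableOn) ?_
    ((hPmeas f).comp (comap_measurable Y)).aestronglyMeasurable).symm
  rintro _ ⟨t, ht, rfl⟩ _
  exact (setIntegral_preimage_eq_of_forall_integral_mul_eq hY hfX hPfY htest ht).symm

theorem stmt8 {ΩX ΩY : Type*}
    [MetricSpace ΩX] [CompleteSpace ΩX] [TopologicalSpace.SeparableSpace ΩX]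
    [MeasurableSpace ΩX] [BorelSpace ΩX]
    [MetricSpace ΩY] [CompleteSpace ΩY] [TopologicalSpace.SeparableSpace ΩY]
    [MeasurableSpace ΩY] [BorelSpace ΩY]
    {Ω : Type*} [MeasurableSpace Ω] (μ : Measure Ω) [IsProbabilityMeasure μ]
    (Xn : ℕ → Ω → ΩX) (Yn : ℕ → Ω → ΩY) (X : Ω → ΩX) (Y : Ω → ΩY)
    (hXn : ∀ n, Measurable (Xn n)) (hYn : ∀ n, Measurable (Yn n))
    (hX : Measurable X) (hY : Measurable Y)
    -- `(Xₙ, Yₙ) → (X, Y)` in law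
    (hconv : ∀ g : BoundedContinuousFunction (ΩX × ΩY) ℝ,
      Tendsto (fun n => ∫ ω, g (Xn n ω, Yn n ω) ∂μ) atTop
        (𝓝 (∫ ω, g (X ω, Y ω) ∂μ)))
    (P : ΩY → Measure ΩX) (hP : ∀ y, IsProbabilityMeasure (P y))
    -- for every bounded continuous `f`, `y ↦ ∫ f dP_y` is measurable
    (hPmeas : ∀ f : BoundedContinuousFunction ΩX ℝ,
      Measurable fun y : ΩY => ∫ a, f a ∂(P y))
    -- `(E[f(Xₙ)|Yₙ], Yₙ) → (∫ f dP_Y, Y)` in law in `ℝ × Ω_Y`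
    (hcond : ∀ f : BoundedContinuousFunction ΩX ℝ,
      ∀ g : BoundedContinuousFunction (ℝ × ΩY) ℝ,
        Tendsto
          (fun n => ∫ ω,
            g ((μ[(fun ω' => f (Xn n ω')) |
                  MeasurableSpace.comap (Yn n) inferInstance]) ω, Yn n ω) ∂μ)
          atTop
          (𝓝 (∫ ω, g (∫ a, f a ∂(P (Y ω)), Y ω) ∂μ))) :
    ∀ f : BoundedContinuousFunction ΩX ℝ,
      (μ[(fun ω => f (X ω)) | MeasurableSpace.comap Y inferInstance])
        =ᵐ[μ] fun ω => ∫ a, f a ∂(P (Y ω)) :=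
  stmt8_general μ Xn Yn X Y hXn hYn hX hY hconv P hP hPmeas hcond
end
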